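/- arXiv:2312.01319 — 10 statements merged into one kernel-verified Lean document; each statement's English description precedes it below -/
import Mathlib

section
/- Let (a_n)_{n≥1} be a strictly decreasing sequence of positive numbers with a_n → 0 as n → ∞. If there exists an integer N ≥ 1 such that limsup_{n→∞} a_{n+N}/a_n < 1, then for any Lebesgue measurable set E ⊆ ℝ with positive Lebesgue measure, there exists a bi-Lipschitz map f : ℝ → ℝ such that f(a_n) ∈ E for all n ≥ 1. -/
open MeasureTheory Filter

/-!
Let `x₀` be a Lebesgue density point of `E`. We take `f x = c * x + g x` with `g` a
`c / 2`-Lipschitz function, so that `f` is bi-Lipschitz, and `g (a n) = x₀ + t n` with shifts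
`t n ≥ 0` that are constant on blocks of consecutive indices. The limsup condition cuts the indices
into blocks of boundedly many terms, each followed by a gap `a n - a (n + 1)` comparable to the
terms of the block, so shifting a block by a small fraction of its size keeps the Lipschitz bound.
As `E` has density close to `1` at the scale of the block, a union bound over its boundedly many
points shows that some such shift moves the whole block into `E`.
-/

open Metric Set Topology
open scoped NNReal ENNReal

theorem LipschitzWith.exists_one_lt_dist_bounds {α β : Type*} [PseudoMetricSpace α]
    [PseudoMetricSpace β] {f : α → β} {K K' : ℝ≥0} (hf : LipschitzWith K f)
    (hf' : AntilipschitzWith K' f) :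
    ∃ L : ℝ, 1 < L ∧ ∀ x y,
      L⁻¹ * dist x y ≤ dist (f x) (f y) ∧ dist (f x) (f y) ≤ L * dist x y := by
  refine ⟨max (max K K') 2, by simp, fun x y => ⟨?_, ?_⟩⟩
  · rw [inv_mul_le_iff₀ (by positivity)]
    exact (hf'.le_mul_dist x y).trans
      (mul_le_mul_of_nonneg_right (le_max_of_le_left (le_max_right _ _)) dist_nonneg)
  · exact (hf.dist_le_mul x y).trans
      (mul_le_mul_of_nonneg_right (le_max_of_le_left (le_max_left _ _)) dist_nonneg)

theorem exists_one_lt_dist_bounds_mul_add {c : ℝ} {K : ℝ≥0} {g : ℝ → ℝ} (hg : LipschitzWith K g)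
    (hK : K < c) :
    ∃ L : ℝ, 1 < L ∧ ∀ x y, L⁻¹ * dist x y ≤ dist (c * x + g x) (c * y + g y) ∧
      dist (c * x + g x) (c * y + g y) ≤ L * dist x y := by
  have hc : 0 < c := K.coe_nonneg.trans_lt hK
  have hKc : K < ‖c‖₊⁻¹⁻¹ := by
    rw [inv_inv, ← NNReal.coe_lt_coe, coe_nnnorm, Real.norm_of_nonneg hc.le]
    exact hK
  exact ((lipschitzWith_smul c).add hg).exists_one_lt_dist_bounds
    ((antilipschitzWith_mul_left hc.ne').add_lipschitzWith hg hKc)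

theorem Antitone.exists_lipschitzWith_of_dist_succ_le {a d : ℕ → ℝ} {K : ℝ≥0} (ha : Antitone a)
    (hd : ∀ n, dist (d n) (d (n + 1)) ≤ K * (a n - a (n + 1))) :
    ∃ g : ℝ → ℝ, LipschitzWith K g ∧ ∀ n, g (a n) = d n := by
  have hle : ∀ n m, n ≤ m → dist (d n) (d m) ≤ K * (a n - a m) := by
    intro n m hnm
    induction m, hnm using Nat.le_induction with
    | base => simp
    | succ m _ ih =>
      calc dist (d n) (d (m + 1)) ≤ dist (d n) (d m) + dist (d m) (d (m + 1)) := dist_triangle ..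
        _ ≤ K * (a n - a m) + K * (a m - a (m + 1)) := add_le_add ih (hd m)
        _ = K * (a n - a (m + 1)) := by ring
  have hdist : ∀ n m, dist (d n) (d m) ≤ K * dist (a n) (a m) := by
    intro n m
    rcases le_total n m with h | h
    · rw [Real.dist_eq (a n), abs_of_nonneg (sub_nonneg.2 (ha h))]
      exact hle n m h
    · rw [dist_comm, dist_comm (a n), Real.dist_eq (a m), abs_of_nonneg (sub_nonneg.2 (ha h))]
      exact hle m n h
  have hinv : ∀ n, d (Function.invFun a (a n)) = d n := fun n =>
    dist_le_zero.1 <| by simpa [Function.invFun_eq ⟨n, rfl⟩] using hdist (Function.invFun a (a n)) n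
  obtain ⟨g, hg, hgd⟩ := (LipschitzOnWith.of_dist_le_mul (s := range a)
    (f := d ∘ Function.invFun a) (by rintro _ ⟨n, rfl⟩ _ ⟨m, rfl⟩; simpa [hinv] using hdist n m))
    |>.extend_real
  exact ⟨g, hg, fun n => (hgd ⟨n, rfl⟩).symm.trans (hinv n)⟩

theorem exists_add_mem_of_card_mul_measure_diff_lt {G ι : Type*} [MeasurableSpace G] [AddGroup G]
    [MeasurableAdd G] {μ : Measure G} [μ.IsAddLeftInvariant] {s : Finset ι} {p : ι → G}
    {B E I : Set G} (hB : ∀ i ∈ s, ∀ τ ∈ I, p i + τ ∈ B) (h : s.card * μ (B \ E) < μ I) :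
    ∃ τ ∈ I, ∀ i ∈ s, p i + τ ∈ E := by
  have hbad : μ (⋃ i ∈ s, (p i + ·) ⁻¹' (B \ E)) < μ I :=
    calc μ (⋃ i ∈ s, (p i + ·) ⁻¹' (B \ E)) ≤ ∑ i ∈ s, μ ((p i + ·) ⁻¹' (B \ E)) :=
          measure_biUnion_finset_le _ _
      _ = s.card * μ (B \ E) := by
          simp only [measure_preimage_add, Finset.sum_const, nsmul_eq_mul]
      _ < μ I := h
  obtain ⟨τ, hτI, hτ⟩ := sdiff_nonempty.2 fun hsub => (measure_mono hsub).not_gt hbad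
  refine ⟨τ, hτI, fun i hi => ?_⟩
  by_contra hτE
  exact hτ (mem_biUnion hi ⟨hB i hi τ hτI, hτE⟩)

theorem exists_add_mem_of_volume_closedBall_diff_le {ι : Type*} {E : Set ℝ} {x₀ r η ε : ℝ}
    {s : Finset ι} {p : ι → ℝ} (hp : ∀ i ∈ s, p i ∈ Icc x₀ (x₀ + r)) (hη : 0 < η)
    (hE : volume (closedBall x₀ (r + η) \ E) ≤ ENNReal.ofReal (ε * (r + η)))
    (hcard : s.card * (ε * (r + η)) < η) :
    ∃ τ ∈ Icc 0 η, ∀ i ∈ s, p i + τ ∈ E := by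
  refine exists_add_mem_of_card_mul_measure_diff_lt (μ := volume) (B := closedBall x₀ (r + η))
    (fun i hi τ hτ => ?_) ?_
  · rw [Real.closedBall_eq_Icc]
    constructor <;> linarith [(hp i hi).1, (hp i hi).2, hτ.1, hτ.2]
  · calc (s.card : ℝ≥0∞) * volume (closedBall x₀ (r + η) \ E)
        ≤ s.card * ENNReal.ofReal (ε * (r + η)) := by gcongr
      _ = ENNReal.ofReal (s.card * (ε * (r + η))) := by
          rw [ENNReal.ofReal_mul (Nat.cast_nonneg _), ENNReal.ofReal_natCast]
      _ < volume (Icc 0 η) := by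
          rw [Real.volume_Icc, sub_zero]
          exact (ENNReal.ofReal_lt_ofReal_iff hη).2 hcard

theorem exists_tendsto_measure_closedBall_diff_div {β : Type*} [MetricSpace β] [MeasurableSpace β]
    [BorelSpace β] [SecondCountableTopology β] [HasBesicovitchCovering β] (μ : Measure β)
    [IsLocallyFiniteMeasure μ] {s : Set β} (hs : MeasurableSet s) (hμs : μ s ≠ 0) :
    ∃ x, Tendsto (fun r => μ (closedBall x r \ s) / μ (closedBall x r)) (𝓝[>] 0) (𝓝 0) := by
  have : (ae (μ.restrict s)).NeBot := ae_restrict_neBot.2 hμs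
  obtain ⟨x, hxs, hx⟩ := ((ae_restrict_mem hs).and (ae_restrict_of_ae
    (Besicovitch.ae_tendsto_measure_inter_div_of_measurableSet μ hs.compl))).exists
  refine ⟨x, ?_⟩
  simpa [indicator_of_notMem (notMem_compl_iff.2 hxs), inter_comm, sdiff_eq] using hx

theorem exists_eventually_volume_closedBall_diff_le {E : Set ℝ} (hE : MeasurableSet E)
    (hEpos : 0 < volume E) :
    ∃ x₀ : ℝ, ∀ ε > 0, ∀ᶠ r in 𝓝[>] 0,
      volume (closedBall x₀ r \ E) ≤ ENNReal.ofReal (ε * r) := by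
  obtain ⟨x₀, hx₀⟩ := exists_tendsto_measure_closedBall_diff_div volume hE hEpos.ne'
  refine ⟨x₀, fun ε hε => ?_⟩
  filter_upwards [hx₀.eventually (gt_mem_nhds (ENNReal.ofReal_pos.2 (half_pos hε))),
    self_mem_nhdsWithin] with r hr (hr0 : 0 < r)
  rw [Real.volume_closedBall, ENNReal.div_lt_iff (Or.inl (by simpa using hr0))
    (Or.inl ENNReal.ofReal_ne_top), ← ENNReal.ofReal_mul (half_pos hε).le] at hr
  calc volume (closedBall x₀ r \ E) ≤ ENNReal.ofReal (ε / 2 * (2 * r)) := hr.le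
    _ = ENNReal.ofReal (ε * r) := by ring_nf

theorem exists_mem_Ico_div_le_sub_succ (b : ℕ → ℝ) (p : ℕ) {N : ℕ} (hN : 1 ≤ N) :
    ∃ j ∈ Finset.Ico p (p + N), (b p - b (p + N)) / N ≤ b j - b (j + 1) := by
  refine Finset.exists_le_of_sum_le (Finset.nonempty_Ico.2 (by omega)) ?_
  rw [Finset.sum_const, Nat.card_Ico, Nat.add_sub_cancel_left, nsmul_eq_mul,
    mul_div_cancel₀ _ (by positivity), Finset.sum_Ico_eq_sum_range, Nat.add_sub_cancel_left]
  simpa [add_assoc] using (Finset.sum_range_sub' (fun i => b (p + i)) N).ge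

theorem exists_lt_one_eventually_le_mul {b : ℕ → ℝ} (hb : Antitone b) (hb0 : ∀ n, 0 < b n)
    {N : ℕ} (h : limsup (fun n => b (n + N) / b n) atTop < 1) :
    ∃ ρ < 1, ∀ᶠ n in atTop, b (n + N) ≤ ρ * b n := by
  obtain ⟨ρ, hlt, hρ⟩ := exists_between h
  have hbdd : IsBoundedUnder (· ≤ ·) atTop fun n => b (n + N) / b n :=
    isBoundedUnder_of_eventually_le (a := 1) <| Eventually.of_forall fun n =>
      div_le_one_of_le₀ (hb (Nat.le_add_right n N)) (hb0 n).le
  exact ⟨ρ, hρ, (eventually_lt_of_limsup_lt hlt hbdd).mono fun n hn =>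
    ((div_lt_iff₀ (hb0 n)).1 hn).le⟩

/-- The blocks are the intervals `[m k, m (k + 1))`. -/
structure IsBlockDecomposition (b : ℕ → ℝ) (m : ℕ → ℕ) (S : ℕ) (δ : ℝ) : Prop where
  zero : m 0 = 0
  strictMono : StrictMono m
  succ_le : ∀ k, m (k + 1) ≤ m k + S
  gap : ∀ k, δ * b (m k) ≤ b (m (k + 1) - 1) - b (m (k + 1))

theorem exists_isBlockDecomposition {b : ℕ → ℝ} (hb : Antitone b) (hb0 : ∀ n, 0 < b n)
    {N : ℕ} (hN : 1 ≤ N) (h : limsup (fun n => b (n + N) / b n) atTop < 1) :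
    ∃ m S δ, 0 < δ ∧ δ ≤ 1 ∧ IsBlockDecomposition b m S δ := by
  obtain ⟨ρ, hρ, hev⟩ := exists_lt_one_eventually_le_mul hb hb0 h
  obtain ⟨M, hM⟩ := eventually_atTop.1 hev
  set c₁ := (1 - ρ) / N
  have hc₁ : 0 < c₁ := div_pos (by linarith) (by exact_mod_cast hN)
  have hgap : ∀ p ≥ M, ∃ j ∈ Finset.Ico p (p + N), c₁ * b p ≤ b j - b (j + 1) := by
    intro p hp
    refine (exists_mem_Ico_div_le_sub_succ b p hN).imp fun j ⟨hj, hle⟩ => ⟨hj, le_trans ?_ hle⟩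
    rw [div_mul_eq_mul_div, div_le_div_iff_of_pos_right (by exact_mod_cast hN)]
    linarith [hM p hp]
  set δ := min (c₁ * b M / b 0) 1
  have hδ : 0 < δ := lt_min (by have := hb0 M; have := hb0 0; positivity) one_pos
  -- the gap is taken after `max p M`, where the decay holds; for `p < M` the factor `b M / b 0`
  -- in `δ` pays for the distance from `p` to `M`
  have hstep : ∀ p, ∃ q, p < q ∧ q ≤ p + (M + N) ∧ δ * b p ≤ b (q - 1) - b q := by
    intro p
    obtain ⟨j, hj, hgj⟩ := hgap (max p M) (le_max_right _ _)
    rw [Finset.mem_Ico] at hj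
    refine ⟨j + 1, by omega, by omega, le_trans ?_ hgj⟩
    have hδle : δ * b 0 ≤ c₁ * b M := by
      calc δ * b 0 ≤ c₁ * b M / b 0 * b 0 := by gcongr; exacts [(hb0 0).le, min_le_left _ _]
        _ = c₁ * b M := div_mul_cancel₀ _ (hb0 0).ne'
    rcases le_total p M with hpM | hMp
    · rw [max_eq_right hpM]
      exact (mul_le_mul_of_nonneg_left (hb (Nat.zero_le p)) hδ.le).trans hδle
    · rw [max_eq_left hMp]
      have hδc₁ : δ ≤ c₁ := le_of_mul_le_mul_right
        (hδle.trans (mul_le_mul_of_nonneg_left (hb (Nat.zero_le M)) hc₁.le)) (hb0 0)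
      exact mul_le_mul_of_nonneg_right hδc₁ (hb0 p).le
  choose nxt hnxt using hstep
  refine ⟨fun k => nxt^[k] 0, M + N, δ, hδ, min_le_right _ _, ⟨rfl, ?_, fun k => ?_, fun k => ?_⟩⟩
  · exact strictMono_nat_of_lt_succ fun k => by
      simpa only [Function.iterate_succ_apply'] using (hnxt _).1
  · simpa only [Function.iterate_succ_apply'] using (hnxt _).2.1
  · simpa only [Function.iterate_succ_apply'] using (hnxt _).2.2

/-- The index `k` of the block `[m k, m (k + 1))` containing `n`. -/
noncomputable def blockIndex (m : ℕ → ℕ) (n : ℕ) : ℕ :=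
  Nat.findGreatest (fun k => m k ≤ n) n

section blockIndex

variable {m : ℕ → ℕ}

theorem blockIndex_spec (hm0 : m 0 = 0) (hm : StrictMono m) (n : ℕ) :
    m (blockIndex m n) ≤ n ∧ n < m (blockIndex m n + 1) := by
  refine ⟨Nat.findGreatest_spec (P := fun k => m k ≤ n) (Nat.zero_le n) (by omega), ?_⟩
  by_contra! h
  exact Nat.findGreatest_is_greatest (Nat.lt_succ_self _) ((hm.id_le _).trans h) h

theorem blockIndex_eq_of_le_of_lt (hm0 : m 0 = 0) (hm : StrictMono m) {k n : ℕ}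
    (h₁ : m k ≤ n) (h₂ : n < m (k + 1)) : blockIndex m n = k := by
  obtain ⟨hK₁, hK₂⟩ := blockIndex_spec hm0 hm n
  rcases lt_trichotomy (blockIndex m n) k with h | h | h
  · exact absurd (hm.monotone (show blockIndex m n + 1 ≤ k by omega)) (by omega)
  · exact h
  · exact absurd (hm.monotone (show k + 1 ≤ blockIndex m n by omega)) (by omega)

theorem blockIndex_succ (hm0 : m 0 = 0) (hm : StrictMono m) (n : ℕ) :
    blockIndex m (n + 1) = blockIndex m n ∨
      m (blockIndex m n + 1) = n + 1 ∧ blockIndex m (n + 1) = blockIndex m n + 1 := by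
  obtain ⟨hK₁, hK₂⟩ := blockIndex_spec hm0 hm n
  by_cases h : n + 1 < m (blockIndex m n + 1)
  · exact Or.inl (blockIndex_eq_of_le_of_lt hm0 hm (by omega) h)
  · have heq : m (blockIndex m n + 1) = n + 1 := by omega
    exact Or.inr ⟨heq, blockIndex_eq_of_le_of_lt hm0 hm heq.le (heq ▸ hm (Nat.lt_succ_self _))⟩

end blockIndex

namespace IsBlockDecomposition

variable {b : ℕ → ℝ} {m : ℕ → ℕ} {S : ℕ} {δ : ℝ}

theorem exists_shift (hm : IsBlockDecomposition b m S δ) (hb : Antitone b) (hb0 : ∀ n, 0 < b n)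
    (hδ : 0 < δ) (hδ1 : δ ≤ 1) {E : Set ℝ} {x₀ : ℝ}
    (hx₀ : ∀ ε > 0, ∀ᶠ r in 𝓝[>] 0, volume (closedBall x₀ r \ E) ≤ ENNReal.ofReal (ε * r)) :
    ∃ c > 0, ∃ t : ℕ → ℝ, ∀ k, t k ∈ Icc 0 (c / 2 * δ * b (m k)) ∧
      ∀ n ∈ Finset.Ico (m k) (m (k + 1)), x₀ + c * b n + t k ∈ E := by
  have hS : (0 : ℝ) < S := by
    have h₁ := hm.succ_le 0
    have h₂ : m 0 < m (0 + 1) := hm.strictMono (Nat.lt_succ_self 0)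
    exact_mod_cast (by omega : 0 < S)
  obtain ⟨r₀, hr₀, hsub⟩ :=
    mem_nhdsGT_iff_exists_Ioc_subset.1 (hx₀ (δ / (8 * S)) (by positivity))
  set c := r₀ / (2 * b 0)
  have hc : 0 < c := div_pos hr₀ (by linarith [hb0 0])
  have hcb : c * b 0 = r₀ / 2 := by
    simp only [c]
    field_simp [(hb0 0).ne']
  suffices h : ∀ k, ∃ τ ∈ Icc 0 (c / 2 * δ * b (m k)),
      ∀ n ∈ Finset.Ico (m k) (m (k + 1)), x₀ + c * b n + τ ∈ E by
    choose t ht htE using h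
    exact ⟨c, hc, t, fun k => ⟨ht k, htE k⟩⟩
  intro k
  set r := c * b (m k)
  have hr : 0 < r := mul_pos hc (hb0 _)
  have hrr₀ : r ≤ r₀ / 2 := hcb ▸ mul_le_mul_of_nonneg_left (hb (Nat.zero_le _)) hc.le
  have hcard : ((Finset.Ico (m k) (m (k + 1))).card : ℝ) ≤ S := by
    rw [Nat.card_Ico]
    exact_mod_cast Nat.sub_le_iff_le_add'.2 (hm.succ_le k)
  have hη : c / 2 * δ * b (m k) = δ / 2 * r := by ring
  rw [hη]
  refine exists_add_mem_of_volume_closedBall_diff_le (ε := δ / (8 * S)) (r := r)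
    (fun n hn => ?_) (by positivity) (hsub ⟨by positivity, by nlinarith⟩) ?_
  · rw [Finset.mem_Ico] at hn
    have := mul_le_mul_of_nonneg_left (hb hn.1) hc.le
    constructor <;> nlinarith [hb0 n]
  · calc ((Finset.Ico (m k) (m (k + 1))).card : ℝ) * (δ / (8 * S) * (r + δ / 2 * r))
        ≤ S * (δ / (8 * S) * (2 * r)) := by gcongr; nlinarith
      _ = δ / 4 * r := by field_simp; ring
      _ < δ / 2 * r := by nlinarith

theorem dist_shift_blockIndex_succ_le (hm : IsBlockDecomposition b m S δ) (hb : Antitone b)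
    (hδ : 0 ≤ δ) {K : ℝ} (hK : 0 ≤ K) {t : ℕ → ℝ} (ht : ∀ k, t k ∈ Icc 0 (K * δ * b (m k)))
    (n : ℕ) :
    dist (t (blockIndex m n)) (t (blockIndex m (n + 1))) ≤ K * (b n - b (n + 1)) := by
  rcases blockIndex_succ hm.zero hm.strictMono n with h | ⟨hjump, h⟩
  · rw [h, dist_self]
    exact mul_nonneg hK (sub_nonneg.2 (hb (Nat.le_succ n)))
  · set k := blockIndex m n
    have hgap := hm.gap k
    rw [hjump, Nat.add_sub_cancel] at hgap
    have hnext : t (k + 1) ∈ Icc 0 (K * δ * b (m k)) :=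
      ⟨(ht _).1, (ht _).2.trans <| mul_le_mul_of_nonneg_left
        (hb (hm.strictMono (Nat.lt_succ_self k)).le) (mul_nonneg hK hδ)⟩
    rw [h]
    calc dist (t k) (t (k + 1)) ≤ K * δ * b (m k) - 0 := Real.dist_le_of_mem_Icc (ht k) hnext
      _ ≤ K * (b n - b (n + 1)) := by
          rw [sub_zero, mul_assoc]
          exact mul_le_mul_of_nonneg_left hgap hK

theorem exists_perturbation (hm : IsBlockDecomposition b m S δ) (hb : Antitone b)
    (hb0 : ∀ n, 0 < b n) (hδ : 0 < δ) (hδ1 : δ ≤ 1) {E : Set ℝ} {x₀ : ℝ}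
    (hx₀ : ∀ ε > 0, ∀ᶠ r in 𝓝[>] 0, volume (closedBall x₀ r \ E) ≤ ENNReal.ofReal (ε * r)) :
    ∃ c > 0, ∃ d : ℕ → ℝ, (∀ n, c * b n + d n ∈ E) ∧
      ∀ n, dist (d n) (d (n + 1)) ≤ c / 2 * (b n - b (n + 1)) := by
  obtain ⟨c, hc, t, ht⟩ := hm.exists_shift hb hb0 hδ hδ1 hx₀
  refine ⟨c, hc, fun n => x₀ + t (blockIndex m n), fun n => ?_, fun n => ?_⟩
  · have := (ht _).2 n (Finset.mem_Ico.2 (blockIndex_spec hm.zero hm.strictMono n))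
    rwa [add_comm x₀, add_assoc] at this
  · rw [dist_add_left]
    exact hm.dist_shift_blockIndex_succ_le hb hδ.le (by positivity) (fun k => (ht k).1) n

end IsBlockDecomposition

theorem stmt2_general (a : ℕ → ℝ) (hpos : ∀ n ≥ 1, 0 < a n)
    (hdec : ∀ n ≥ 1, a (n + 1) < a n)
    (N : ℕ) (hN : 1 ≤ N)
    (hlimsup : Filter.limsup (fun n => a (n + N) / a n) atTop < 1)
    (E : Set ℝ) (hE : MeasurableSet E) (hEpos : 0 < volume E) :
    ∃ f : ℝ → ℝ, (∃ L : ℝ, 1 < L ∧ ∀ x y : ℝ,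
        L⁻¹ * |x - y| ≤ |f x - f y| ∧ |f x - f y| ≤ L * |x - y|) ∧
      ∀ n ≥ 1, f (a n) ∈ E := by
  set b : ℕ → ℝ := fun n => a (n + 1)
  have hb : Antitone b := antitone_nat_of_succ_le fun n => (hdec (n + 1) (by omega)).le
  have hb0 : ∀ n, 0 < b n := fun n => hpos (n + 1) (by omega)
  have hblimsup : limsup (fun n => b (n + N) / b n) atTop < 1 := by
    rw [← limsup_nat_add _ 1] at hlimsup
    simpa only [b, add_right_comm] using hlimsup
  obtain ⟨m, S, δ, hδ, hδ1, hm⟩ := exists_isBlockDecomposition hb hb0 hN hblimsup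
  obtain ⟨x₀, hx₀⟩ := exists_eventually_volume_closedBall_diff_le hE hEpos
  obtain ⟨c, hc, d, hdE, hd⟩ := hm.exists_perturbation hb hb0 hδ hδ1 hx₀
  obtain ⟨g, hg, hgd⟩ := hb.exists_lipschitzWith_of_dist_succ_le (K := (c / 2).toNNReal)
    (by simpa [max_eq_left (half_pos hc).le] using hd)
  refine ⟨fun x => c * x + g x, ?_, fun n hn => ?_⟩
  · simpa only [Real.dist_eq] using exists_one_lt_dist_bounds_mul_add hg
      (by rw [Real.coe_toNNReal _ (half_pos hc).le]; linarith)
  · obtain ⟨n, rfl⟩ := Nat.exists_eq_add_of_le' hn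
    have := hdE n
    rwa [← hgd n] at this

theorem stmt2 (a : ℕ → ℝ) (hpos : ∀ n ≥ 1, 0 < a n)
    (hdec : ∀ n ≥ 1, a (n + 1) < a n)
    (hlim : Tendsto a atTop (nhds 0))
    (N : ℕ) (hN : 1 ≤ N)
    (hlimsup : Filter.limsup (fun n => a (n + N) / a n) atTop < 1)
    (E : Set ℝ) (hE : MeasurableSet E) (hEpos : 0 < volume E) :
    ∃ f : ℝ → ℝ, (∃ L : ℝ, 1 < L ∧ ∀ x y : ℝ,
        L⁻¹ * |x - y| ≤ |f x - f y| ∧ |f x - f y| ≤ L * |x - y|) ∧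
      ∀ n ≥ 1, f (a n) ∈ E :=
  stmt2_general a hpos hdec N hN hlimsup E hE hEpos
end

section
/- Let (a_n)_{n≥1} and (b_n)_{n≥1} be strictly decreasing sequences of positive real numbers with a_n → 0 and b_n → 0, and suppose that (b_n - b_{n+1})/(a_n - a_{n+1}) → 1 as n → ∞. Then the piecewise linear map f : ℝ → ℝ defined by f(x) = x for x ≤ 0, f(x) = ((a_n - x) b_{n+1} + (x - a_{n+1}) b_n)/(a_n - a_{n+1}) for a_{n+1} ≤ x ≤ a_n, and f(x) = x - a₁ + b₁ for x > a₁, is bi-Lipschitz, satisfies f(a_n) = b_n for all n, and is differentiable at 0 with f'(0) = 1. -/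
/-!
On `[a (n + 1), a n]` the map `f` is affine with slope `(b n - b (n + 1)) / (a n - a (n + 1))`,
and it has slope `1` on the two unbounded pieces. These slopes are positive and tend to `1`, so
they all lie in some `[L⁻¹, L]`, and so do the difference quotients of `f`: gluing the segments
bounds them on each `[a n, a 1]`, and since `f (a n) = b n → 0 = f 0` the bounds pass to
`[0, a 1]`. The same argument applied only to the segments beyond `a N` gives difference quotients
in `[1 - c, 1 + c]` on `[0, a N]`, which is differentiability at `0` with derivative `1`.
-/

open Filter Set Topology

def HasSlopesIn (f : ℝ → ℝ) (m M : ℝ) (s : Set ℝ) : Prop :=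
  ∀ x ∈ s, ∀ y ∈ s, x ≤ y → m * (y - x) ≤ f y - f x ∧ f y - f x ≤ M * (y - x)

namespace HasSlopesIn

variable {f : ℝ → ℝ} {m M : ℝ} {s t : Set ℝ}

theorem of_subsingleton (hs : s.Subsingleton) : HasSlopesIn f m M s := by
  intro x hx y hy _
  rw [hs hx hy]
  simp

theorem of_sub_eq_mul {c : ℝ} (hc : c ∈ Icc m M)
    (h : ∀ x ∈ s, ∀ y ∈ s, f y - f x = c * (y - x)) : HasSlopesIn f m M s := by
  intro x hx y hy hxy
  rw [h x hx y hy]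
  exact ⟨mul_le_mul_of_nonneg_right hc.1 (sub_nonneg.2 hxy),
    mul_le_mul_of_nonneg_right hc.2 (sub_nonneg.2 hxy)⟩

theorem union {v : ℝ} (hs : HasSlopesIn f m M s) (ht : HasSlopesIn f m M t)
    (hvs : v ∈ s) (hvt : v ∈ t) (hsv : ∀ x ∈ s, x ≤ v) (htv : ∀ y ∈ t, v ≤ y) :
    HasSlopesIn f m M (s ∪ t) := by
  rintro x (hx | hx) y (hy | hy) hxy
  · exact hs x hx y hy hxy
  · obtain ⟨h₁, h₂⟩ := hs x hx v hvs (hsv x hx)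
    obtain ⟨h₃, h₄⟩ := ht v hvt y hy (htv y hy)
    constructor <;> linarith
  · obtain rfl : x = y := le_antisymm hxy ((hsv y hy).trans (htv x hx))
    simp
  · exact ht x hx y hy hxy

theorem abs_sub_le (h : HasSlopesIn f m M univ) (hm : 0 ≤ m) (x y : ℝ) :
    m * |x - y| ≤ |f x - f y| ∧ |f x - f y| ≤ M * |x - y| := by
  wlog hyx : y ≤ x generalizing x y
  · rw [abs_sub_comm x, abs_sub_comm (f x)]
    exact this y x (le_of_not_ge hyx)
  obtain ⟨h₁, h₂⟩ := h y trivial x trivial hyx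
  have hf : 0 ≤ f x - f y := (mul_nonneg hm (sub_nonneg.2 hyx)).trans h₁
  rw [abs_of_nonneg (sub_nonneg.2 hyx), abs_of_nonneg hf]
  exact ⟨h₁, h₂⟩

theorem univ_of_Iic_Icc_Ici {l r : ℝ} (hlr : l ≤ r) (hleft : HasSlopesIn f m M (Iic l))
    (hmid : HasSlopesIn f m M (Icc l r)) (hright : HasSlopesIn f m M (Ici r)) :
    HasSlopesIn f m M univ := by
  rw [← Iic_union_Ici (a := r)]
  refine .union ?_ hright self_mem_Iic self_mem_Ici (fun x hx => hx) fun y hy => hy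
  rw [← Iic_union_Icc_eq_Iic hlr]
  exact hleft.union hmid self_mem_Iic (left_mem_Icc.2 hlr) (fun x hx => hx) fun y hy => hy.1

end HasSlopesIn

theorem hasDerivAt_zero_of_hasSlopesIn {f : ℝ → ℝ} (hf0 : ∀ x ≤ (0 : ℝ), f x = x)
    (h : ∀ c > 0, ∃ r > 0, HasSlopesIn f (1 - c) (1 + c) (Icc 0 r)) : HasDerivAt f 1 0 := by
  rw [hasDerivAt_iff_isLittleO, Asymptotics.isLittleO_iff]
  intro c hc
  obtain ⟨r, hr, hslopes⟩ := h c hc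
  filter_upwards [Iio_mem_nhds hr] with x hxr
  simp only [hf0 0 le_rfl, sub_zero, smul_eq_mul, mul_one, Real.norm_eq_abs]
  rcases le_or_gt x 0 with hx | hx
  · rw [hf0 x hx, sub_self, abs_zero]
    positivity
  · obtain ⟨h₁, h₂⟩ := hslopes 0 ⟨le_rfl, hr.le⟩ x ⟨hx.le, hxr.le⟩ hx.le
    rw [hf0 0 le_rfl, sub_zero, sub_zero] at h₁ h₂
    rw [abs_of_pos hx, abs_le]
    constructor <;> linarith

theorem exists_forall_mem_Icc_inv_of_tendsto {u : ℕ → ℝ} (hpos : ∀ n, 0 < u n) {l : ℝ}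
    (hl : 0 < l) (h : Tendsto u atTop (𝓝 l)) : ∃ L > 1, ∀ n, u n ∈ Icc L⁻¹ L := by
  obtain ⟨A, hA⟩ := h.bddAbove_range
  obtain ⟨B, hB⟩ := (h.inv₀ hl.ne').bddAbove_range
  refine ⟨max (max A B) 2, by simp, fun n => ⟨?_, ?_⟩⟩
  · rw [inv_le_comm₀ (by positivity) (hpos n)]
    exact (hB (mem_range_self n)).trans ((le_max_right A B).trans (le_max_left _ _))
  · exact (hA (mem_range_self n)).trans ((le_max_left A B).trans (le_max_left _ _))

noncomputable def segmentSlope (a b : ℕ → ℝ) (n : ℕ) : ℝ := (b n - b (n + 1)) / (a n - a (n + 1))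

section Segments

variable {a b : ℕ → ℝ} {f : ℝ → ℝ} {m M : ℝ} {N : ℕ}

theorem exists_segmentSlope_mem_Icc_inv (hadec : ∀ n ≥ 1, a (n + 1) < a n)
    (hbdec : ∀ n ≥ 1, b (n + 1) < b n) {l : ℝ} (hl : 0 < l)
    (hlim : Tendsto (segmentSlope a b) atTop (𝓝 l)) :
    ∃ L > 1, ∀ n ≥ 1, segmentSlope a b n ∈ Icc L⁻¹ L := by
  obtain ⟨L, hL1, hL⟩ := exists_forall_mem_Icc_inv_of_tendsto
    (fun n => div_pos (sub_pos.2 (hbdec (n + 1) le_add_self))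
      (sub_pos.2 (hadec (n + 1) le_add_self))) hl ((tendsto_add_atTop_iff_nat 1).2 hlim)
  refine ⟨L, hL1, fun n hn => ?_⟩
  obtain ⟨k, rfl⟩ := Nat.exists_eq_add_of_le' hn
  exact hL k

theorem sub_eq_segmentSlope_mul {n : ℕ} (hn : a (n + 1) < a n)
    (hf : ∀ x ∈ Icc (a (n + 1)) (a n),
      f x = ((a n - x) * b (n + 1) + (x - a (n + 1)) * b n) / (a n - a (n + 1))) :
    ∀ x ∈ Icc (a (n + 1)) (a n), ∀ y ∈ Icc (a (n + 1)) (a n),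
      f y - f x = segmentSlope a b n * (y - x) := by
  intro x hx y hy
  have hd : a n - a (n + 1) ≠ 0 := (sub_pos.2 hn).ne'
  rw [hf x hx, hf y hy, segmentSlope]
  field_simp
  ring

theorem hasSlopesIn_Icc_of_le (ha : ∀ n ≥ N, a (n + 1) ≤ a n)
    (hseg : ∀ n ≥ N, ∀ x ∈ Icc (a (n + 1)) (a n), ∀ y ∈ Icc (a (n + 1)) (a n),
      f y - f x = segmentSlope a b n * (y - x))
    (hs : ∀ n ≥ N, segmentSlope a b n ∈ Icc m M) {n : ℕ} (hn : N ≤ n) :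
    HasSlopesIn f m M (Icc (a n) (a N)) := by
  induction n, hn using Nat.le_induction with
  | base => exact .of_subsingleton (by simp)
  | succ n hn ih =>
    have hnN : a n ≤ a N := antitoneOn_nat_Ici_of_succ_le ha (le_refl N) hn hn
    rw [← Icc_union_Icc_eq_Icc (ha n hn) hnN]
    exact (HasSlopesIn.of_sub_eq_mul (hs n hn) (hseg n hn)).union ih
      ⟨ha n hn, le_rfl⟩ ⟨le_rfl, hnN⟩ (fun x hx => hx.2) fun y hy => hy.1

theorem hasSlopesIn_Icc_zero (ha : ∀ n ≥ N, a (n + 1) ≤ a n)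
    (halim : Tendsto a atTop (𝓝 0)) (hblim : Tendsto b atTop (𝓝 0))
    (hseg : ∀ n ≥ N, ∀ x ∈ Icc (a (n + 1)) (a n), ∀ y ∈ Icc (a (n + 1)) (a n),
      f y - f x = segmentSlope a b n * (y - x))
    (hs : ∀ n ≥ N, segmentSlope a b n ∈ Icc m M)
    (hfa : ∀ n ≥ N, f (a n) = b n) (hf0 : f 0 = 0) :
    HasSlopesIn f m M (Icc 0 (a N)) := by
  intro x hx y hy hxy
  rcases hx.1.eq_or_lt with rfl | hx0
  · rcases hxy.eq_or_lt with rfl | hy0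
    · simp
    -- `f 0 = 0 = lim b n = lim f (a n)`, so the bounds for `a n ≤ y` pass to the limit
    have hbounds : ∀ᶠ n in atTop,
        m * (y - a n) ≤ f y - b n ∧ f y - b n ≤ M * (y - a n) := by
      filter_upwards [eventually_ge_atTop N, halim.eventually (eventually_le_nhds hy0)]
        with n hn hny
      rw [← hfa n hn]
      exact hasSlopesIn_Icc_of_le ha hseg hs hn (a n) ⟨le_rfl, hny.trans hy.2⟩ y
        ⟨hny, hy.2⟩ hny
    have hlimA (c : ℝ) : Tendsto (fun n => c * (y - a n)) atTop (𝓝 (c * (y - 0))) :=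
      (tendsto_const_nhds.sub halim).const_mul c
    have hlimB : Tendsto (fun n => f y - b n) atTop (𝓝 (f y - f 0)) := by
      simpa [hf0] using tendsto_const_nhds.sub hblim
    exact ⟨le_of_tendsto_of_tendsto (hlimA m) hlimB (hbounds.mono fun _ h => h.1),
      le_of_tendsto_of_tendsto hlimB (hlimA M) (hbounds.mono fun _ h => h.2)⟩
  · obtain ⟨n, hn, hnx⟩ := ((eventually_ge_atTop N).and
      (halim.eventually (eventually_le_nhds hx0))).exists
    exact hasSlopesIn_Icc_of_le ha hseg hs hn x ⟨hnx, hx.2⟩ y ⟨hnx.trans hxy, hy.2⟩ hxy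

end Segments

theorem stmt4_general (a b : ℕ → ℝ) (hapos : ∀ n ≥ 1, 0 < a n)
    (hadec : ∀ n ≥ 1, a (n + 1) < a n) (hbdec : ∀ n ≥ 1, b (n + 1) < b n)
    (halim : Tendsto a atTop (nhds 0)) (hblim : Tendsto b atTop (nhds 0))
    (hratio : Tendsto (fun n => (b n - b (n + 1)) / (a n - a (n + 1))) atTop (nhds 1))
    (f : ℝ → ℝ)
    (hf0 : ∀ x ≤ (0:ℝ), f x = x)
    (hfmid : ∀ n ≥ 1, ∀ x ∈ Set.Icc (a (n + 1)) (a n),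
      f x = ((a n - x) * b (n + 1) + (x - a (n + 1)) * b n) / (a n - a (n + 1)))
    (hftop : ∀ x > a 1, f x = x - a 1 + b 1) :
    (∃ L : ℝ, 1 < L ∧ ∀ x y : ℝ,
        L⁻¹ * |x - y| ≤ |f x - f y| ∧ |f x - f y| ≤ L * |x - y|) ∧
      (∀ n ≥ 1, f (a n) = b n) ∧ HasDerivAt f 1 0 := by
  have hseg (n : ℕ) (hn : n ≥ 1) := sub_eq_segmentSlope_mul (hadec n hn) (hfmid n hn)
  have hfa (n : ℕ) (hn : n ≥ 1) : f (a n) = b n := by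
    rw [hfmid n hn (a n) ⟨(hadec n hn).le, le_rfl⟩, sub_self, zero_mul, zero_add,
      mul_div_cancel_left₀ _ (sub_pos.2 (hadec n hn)).ne']
  have ha1 : 0 ≤ a 1 := (hapos 1 le_rfl).le
  have hf00 : f 0 = 0 := hf0 0 le_rfl
  refine ⟨?_, hfa, hasDerivAt_zero_of_hasSlopesIn hf0 fun c hc => ?_⟩
  · obtain ⟨L, hL1, hslopes⟩ := exists_segmentSlope_mem_Icc_inv hadec hbdec one_pos hratio
    have hone : (1 : ℝ) ∈ Icc L⁻¹ L := ⟨inv_le_one_of_one_le₀ hL1.le, hL1.le⟩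
    have htop (x : ℝ) (hx : x ∈ Ici (a 1)) : f x = x - a 1 + b 1 := by
      rcases (mem_Ici.1 hx).eq_or_lt with rfl | hx
      · rw [hfa 1 le_rfl]; ring
      · exact hftop x hx
    have huniv : HasSlopesIn f L⁻¹ L univ := .univ_of_Iic_Icc_Ici ha1
      (.of_sub_eq_mul hone fun x hx y hy => by rw [hf0 x hx, hf0 y hy]; ring)
      (hasSlopesIn_Icc_zero (fun n hn => (hadec n hn).le) halim hblim hseg hslopes hfa hf00)
      (.of_sub_eq_mul hone fun x hx y hy => by rw [htop x hx, htop y hy]; ring)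
    exact ⟨L, hL1, huniv.abs_sub_le (by positivity)⟩
  · obtain ⟨N, hN⟩ := ((hratio.eventually (Icc_mem_nhds (by linarith : 1 - c < 1)
      (by linarith : 1 < 1 + c))).and (eventually_ge_atTop 1)).exists_forall_of_atTop
    have hN1 : 1 ≤ N := (hN N le_rfl).2
    exact ⟨a N, hapos N hN1, hasSlopesIn_Icc_zero (fun n hn => (hadec n (hN1.trans hn)).le)
      halim hblim (fun n hn => hseg n (hN1.trans hn)) (fun n hn => (hN n hn).1)
      (fun n hn => hfa n (hN1.trans hn)) hf00⟩

theorem stmt4 (a b : ℕ → ℝ) (hapos : ∀ n ≥ 1, 0 < a n) (hbpos : ∀ n ≥ 1, 0 < b n)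
    (hadec : ∀ n ≥ 1, a (n + 1) < a n) (hbdec : ∀ n ≥ 1, b (n + 1) < b n)
    (halim : Tendsto a atTop (nhds 0)) (hblim : Tendsto b atTop (nhds 0))
    (hratio : Tendsto (fun n => (b n - b (n + 1)) / (a n - a (n + 1))) atTop (nhds 1))
    (f : ℝ → ℝ)
    (hf0 : ∀ x ≤ (0:ℝ), f x = x)
    (hfmid : ∀ n ≥ 1, ∀ x ∈ Set.Icc (a (n + 1)) (a n),
      f x = ((a n - x) * b (n + 1) + (x - a (n + 1)) * b n) / (a n - a (n + 1)))
    (hftop : ∀ x > a 1, f x = x - a 1 + b 1) :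
    (∃ L : ℝ, 1 < L ∧ ∀ x y : ℝ,
        L⁻¹ * |x - y| ≤ |f x - f y| ∧ |f x - f y| ≤ L * |x - y|) ∧
      (∀ n ≥ 1, f (a n) = b n) ∧ HasDerivAt f 1 0 :=
  stmt4_general a b hapos hadec hbdec halim hblim hratio f hf0 hfmid hftop
end

section
/- Let (a_n)_{n≥1} be a strictly decreasing sequence of positive real numbers with a_n → 0 and lim_{n→∞} a_{n+1}/a_n = 1. Then there exists a strictly increasing sequence (n_k)_{k≥1} of natural numbers such that lim_{k→∞} a_{n_{k+1}}/a_{n_k} = 1 and a_{n_k} - a_{n_{k+1}} ≤ 2 (a_{n_m} - a_{n_{m+1}}) for all k, m ∈ ℕ with k > m. -/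
open Filter

theorem stmt5 (a : ℕ → ℝ) (hpos : ∀ n ≥ 1, 0 < a n)
    (hdec : ∀ n ≥ 1, a (n + 1) < a n)
    (hlim : Tendsto a atTop (nhds 0))
    (hratio : Tendsto (fun n => a (n + 1) / a n) atTop (nhds 1)) :
    ∃ nk : ℕ → ℕ, StrictMono nk ∧ (∀ k, 1 ≤ nk k) ∧
      Tendsto (fun k => a (nk (k + 1)) / a (nk k)) atTop (nhds 1) ∧
      ∀ k m : ℕ, m < k → a (nk k) - a (nk (k + 1)) ≤ 2 * (a (nk m) - a (nk (m + 1))) := by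
  classical
  -- a is antitone on [1, ∞)
  have hmono : ∀ m n : ℕ, 1 ≤ m → m ≤ n → a n ≤ a m := by
    intro m n hm hmn
    induction n, hmn using Nat.le_induction with
    | base => exact le_rfl
    | succ n hmn ih => exact le_trans (hdec n (hm.trans hmn)).le ih
  have hc0 : Tendsto (fun n => 1 - a (n + 1) / a n) atTop (nhds 0) := by
    simpa using (tendsto_const_nhds : Tendsto (fun _ : ℕ => (1:ℝ)) atTop (nhds 1)).sub hratio
  obtain ⟨N₁, hN₁⟩ := Metric.tendsto_atTop.mp hc0 (1/16) (by norm_num)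
  set N₀ := max N₁ 1 with hN₀def
  have hN₀1 : 1 ≤ N₀ := le_max_right _ _
  have hcsmall : ∀ m, N₀ ≤ m → 1 - a (m+1)/a m ≤ 1/16 := by
    intro m hm
    have h := hN₁ m (le_trans (le_max_left _ _) hm)
    rw [Real.dist_eq, sub_zero] at h
    exact (abs_lt.mp h).2.le
  have hcpos : ∀ m, 1 ≤ m → 0 < 1 - a (m+1)/a m := by
    intro m hm
    have h1 : a (m+1) < a m := hdec m hm
    have h2 : 0 < a m := hpos m hm
    have h3 : a (m+1)/a m < 1 := by rw [div_lt_one h2]; exact h1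
    linarith
  let G : ℕ → ℝ := fun n => ⨆ m, (1 - a (n + m + 1) / a (n + m))
  have hGbdd : ∀ n, N₀ ≤ n → BddAbove (Set.range fun m => 1 - a (n + m + 1) / a (n + m)) := by
    intro n hn
    refine ⟨1/16, ?_⟩
    rintro x ⟨m, rfl⟩
    exact hcsmall (n+m) (le_trans hn (Nat.le_add_right _ _))
  have hGle : ∀ n, N₀ ≤ n → G n ≤ 1/16 := fun n hn =>
    ciSup_le fun m => hcsmall (n+m) (le_trans hn (Nat.le_add_right _ _))
  have hcleG : ∀ n, N₀ ≤ n → ∀ p, n ≤ p → 1 - a (p+1)/a p ≤ G n := by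
    intro n hn p hp
    have h := le_ciSup (hGbdd n hn) (p - n)
    simpa [Nat.add_sub_cancel' hp] using h
  have hGpos : ∀ n, N₀ ≤ n → 0 < G n := by
    intro n hn
    exact lt_of_lt_of_le (hcpos n (hN₀1.trans hn)) (hcleG n hn n le_rfl)
  have hGnonneg : ∀ n, N₀ ≤ n → 0 ≤ G n := fun n hn => (hGpos n hn).le
  have hGanti : ∀ n p, N₀ ≤ n → n ≤ p → G p ≤ G n := by
    intro n p hn hp
    exact ciSup_le fun m => hcleG n hn (p + m) (le_trans hp (Nat.le_add_right _ _))
  have hsqle : ∀ n, N₀ ≤ n → Real.sqrt (G n) ≤ 1/4 := by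
    intro n hn
    have h := Real.sqrt_le_sqrt (hGle n hn)
    calc Real.sqrt (G n) ≤ Real.sqrt (1/16) := h
    _ = 1/4 := by
        rw [show (1/16 : ℝ) = (1/4)^2 by norm_num, Real.sqrt_sq (by norm_num)]
  let g : ℕ → ℝ := fun n => Real.sqrt (G n) * a n
  have hgpos : ∀ n, N₀ ≤ n → 0 < g n :=
    fun n hn => mul_pos (Real.sqrt_pos.mpr (hGpos n hn)) (hpos n (hN₀1.trans hn))
  have hglt : ∀ n, N₀ ≤ n → g n ≤ a n / 4 := by
    intro n hn
    have h1 := hsqle n hn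
    have h2 := (hpos n (hN₀1.trans hn)).le
    calc g n = Real.sqrt (G n) * a n := rfl
    _ ≤ (1/4) * a n := mul_le_mul_of_nonneg_right h1 h2
    _ = a n / 4 := by ring
  have hganti : ∀ n p, N₀ ≤ n → n ≤ p → g p ≤ g n := by
    intro n p hn hp
    exact mul_le_mul (Real.sqrt_le_sqrt (hGanti n p hn hp)) (hmono n p (hN₀1.trans hn) hp)
      (hpos p (le_trans hN₀1 (hn.trans hp))).le (Real.sqrt_nonneg _)
  have hex : ∀ n, N₀ ≤ n → ∃ m, n < m ∧ a m ≤ a n - g n := by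
    intro n hn
    have hε : 0 < a n - g n := by
      have h1 := hglt n hn
      have h2 := hpos n (hN₀1.trans hn)
      linarith
    obtain ⟨m, hm1, hm2⟩ :=
      ((eventually_gt_atTop n).and (hlim.eventually (gt_mem_nhds hε))).exists
    exact ⟨m, hm1, hm2.le⟩
  let nk : ℕ → {n : ℕ // N₀ ≤ n} := fun k =>
    Nat.rec (motive := fun _ => {n : ℕ // N₀ ≤ n}) ⟨N₀, le_rfl⟩
      (fun _ p => ⟨Nat.find (hex p.1 p.2), p.2.trans (Nat.find_spec (hex p.1 p.2)).1.le⟩) k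
  have hsucc : ∀ k, (nk (k+1)).1 = Nat.find (hex (nk k).1 (nk k).2) := fun k => rfl
  have hlt' : ∀ k, (nk k).1 < (nk (k+1)).1 := by
    intro k; rw [hsucc k]; exact (Nat.find_spec (hex (nk k).1 (nk k).2)).1
  have hub : ∀ k, a ((nk (k+1)).1) ≤ a ((nk k).1) - g ((nk k).1) := by
    intro k; rw [hsucc k]; exact (Nat.find_spec (hex (nk k).1 (nk k).2)).2
  have hmin : ∀ k j, (nk k).1 < j → j < (nk (k+1)).1 → a ((nk k).1) - g ((nk k).1) < a j := by
    intro k j h1 h2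
    rw [hsucc k] at h2
    by_contra hcon
    push_neg at hcon
    exact Nat.find_min (hex (nk k).1 (nk k).2) h2 ⟨h1, hcon⟩
  have hsm : StrictMono (fun k => (nk k).1) := strictMono_nat_of_lt_succ hlt'
  have hd_lb : ∀ k, g ((nk k).1) ≤ a ((nk k).1) - a ((nk (k+1)).1) := by
    intro k; have h := hub k; linarith
  have hd_ub : ∀ k, a ((nk k).1) - a ((nk (k+1)).1) ≤ (5/4) * g ((nk k).1) := by
    intro k
    have hn : N₀ ≤ (nk k).1 := (nk k).2
    have hnn' : (nk k).1 < (nk (k+1)).1 := hlt' k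
    set n := (nk k).1 with hn_def
    set n' := (nk (k+1)).1 with hn'_def
    set p := n' - 1 with hp_def
    have hp1 : p + 1 = n' := by omega
    have hnp : n ≤ p := by omega
    have happ : a n - g n < a p := by
      rcases eq_or_lt_of_le hnp with h | h
      · rw [← h]; have := hgpos n hn; linarith
      · exact hmin k p h (by omega)
    have h1 : 1 - a (p+1)/a p ≤ G n := hcleG n hn p hnp
    have hppos : 0 < a p := hpos p (le_trans hN₀1 (hn.trans hnp))
    have h2 : a p - a (p+1) ≤ G n * a p := by
      have h3 : (1 - a (p+1)/a p) * a p ≤ G n * a p := mul_le_mul_of_nonneg_right h1 hppos.le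
      have h4 : (1 - a (p+1)/a p) * a p = a p - a (p+1) := by field_simp
      linarith
    have hpan : a p ≤ a n := hmono n p (hN₀1.trans hn) hnp
    have hGn : 0 ≤ G n := hGnonneg n hn
    have h5 : G n * a p ≤ G n * a n := mul_le_mul_of_nonneg_left hpan hGn
    have h6 : a n - a n' ≤ g n + G n * a n := by
      rw [← hp1]; linarith
    have hsq : Real.sqrt (G n) ≤ 1/4 := hsqle n hn
    have hsqnn : 0 ≤ Real.sqrt (G n) := Real.sqrt_nonneg _
    have h8 : G n = Real.sqrt (G n) * Real.sqrt (G n) := (Real.mul_self_sqrt hGn).symm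
    have hna : 0 ≤ a n := (hpos n (hN₀1.trans hn)).le
    have h7 : G n * a n ≤ (1/4) * (Real.sqrt (G n) * a n) := by
      have h10 := mul_le_mul_of_nonneg_right hsq (mul_nonneg hsqnn hna)
      calc G n * a n = Real.sqrt (G n) * (Real.sqrt (G n) * a n) := by linear_combination a n * h8
      _ ≤ (1/4) * (Real.sqrt (G n) * a n) := h10
    have h9 : g n = Real.sqrt (G n) * a n := rfl
    linarith
  refine ⟨fun k => (nk k).1, hsm, fun k => hN₀1.trans (nk k).2, ?_, ?_⟩
  · -- ratio tends to 1
    have hGt : Tendsto (fun k => G ((nk k).1)) atTop (nhds 0) := by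
      rw [Metric.tendsto_atTop]
      intro ε hε
      obtain ⟨N, hN⟩ := Metric.tendsto_atTop.mp hc0 (ε/2) (by linarith)
      refine ⟨max N N₀, fun k hk => ?_⟩
      have hk1 : N ≤ k := le_trans (le_max_left _ _) hk
      have hkN₀ : N₀ ≤ (nk k).1 := (nk k).2
      have hkk : k ≤ (nk k).1 := hsm.le_apply
      have hle : G ((nk k).1) ≤ ε/2 := by
        apply ciSup_le
        intro m
        have h := hN ((nk k).1 + m) (by omega)
        rw [Real.dist_eq, sub_zero] at h
        exact (abs_lt.mp h).2.le
      have hge0 : 0 ≤ G ((nk k).1) := hGnonneg _ hkN₀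
      rw [Real.dist_eq, sub_zero, abs_of_nonneg hge0]
      linarith
    have hsqt : Tendsto (fun k => Real.sqrt (G ((nk k).1))) atTop (nhds 0) := by
      have h := hGt.sqrt
      simpa using h
    have hlow : Tendsto (fun k => 1 - (5/4) * Real.sqrt (G ((nk k).1))) atTop (nhds 1) := by
      have h := (tendsto_const_nhds : Tendsto (fun _ : ℕ => (1:ℝ)) atTop
        (nhds 1)).sub (hsqt.const_mul (5/4))
      simpa using h
    apply tendsto_of_tendsto_of_tendsto_of_le_of_le hlow tendsto_const_nhds
    · intro k
      have hn : N₀ ≤ (nk k).1 := (nk k).2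
      have hapos : 0 < a ((nk k).1) := hpos _ (hN₀1.trans hn)
      rw [le_div_iff₀ hapos]
      have h1 := hd_ub k
      have h9 : g ((nk k).1) = Real.sqrt (G ((nk k).1)) * a ((nk k).1) := rfl
      nlinarith
    · intro k
      have hn : N₀ ≤ (nk k).1 := (nk k).2
      have hapos : 0 < a ((nk k).1) := hpos _ (hN₀1.trans hn)
      rw [div_le_one hapos]
      exact hmono _ _ (hN₀1.trans hn) (hlt' k).le
  · intro k m hmk
    have h1 := hd_ub k
    have h2 := hd_lb m
    have h3 : g ((nk k).1) ≤ g ((nk m).1) :=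
      hganti _ _ (nk m).2 (hsm.monotone hmk.le)
    have h4 : 0 ≤ g ((nk m).1) := (hgpos _ (nk m).2).le
    linarith
end

section
/- Let (a_n)_{n≥1} be a strictly decreasing sequence of positive real numbers with a_n → 0. Suppose sup_{m > n > 1} (a_{m-1} - a_m)/(a_{n-1} - a_n) < ∞ and limsup_{n→∞} a_{n+1}/a_n = 1. Then there exists a compact set E ⊆ ℝ with positive Lebesgue measure such that there is no bi-Lipschitz map f : ℝ → ℝ with f(a_n) ∈ E for all n ≥ 1. -/
open MeasureTheory Filter Set Topology

/-! Since `limsup a (n + 1) / a n = 1`, there are indices `N j` at which the gap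
`a (N j) - a (N j + 1)` is as small as we like compared with `a (N j)`, and by the gap comparison
hypothesis every later gap is then small too. Around every point of the grid `δ ℕ ∩ [0, 1]`,
for the `j` scales `δ = a (N j) / 2 ^ (l + 3)` with `l < j`, we cut out an open hole of length
`holeWidth j * δ`; the holes have total measure at most `1 / 2`, and `E` is `[0, 1]` minus them.
If `f` is `L`-bi-Lipschitz with `L < 2 ^ j`, one of these scales satisfies `2 δ ≤ a (N j) / L`.
The points `f (a m)`, `m ≥ N j`, converge to `f 0` starting at distance at least `a (N j) / L` from
it, and move in steps shorter than the holes, so one of them lands in a hole lying between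
`f (a (N j))` and `f 0`. -/

lemma exists_mem_Ioo_of_tendsto_of_abs_sub_lt {p : ℕ → ℝ} {t u h : ℝ} {n : ℕ}
    (hp : Tendsto p atTop (𝓝 t)) (hstep : ∀ m ≥ n, |p (m + 1) - p m| < h)
    (htu : t ≤ u) (hpn : u + h ≤ p n) : ∃ m ≥ n, p m ∈ Ioo u (u + h) := by
  by_contra! hnot
  have hge : ∀ m ≥ n, u + h ≤ p m := by
    intro m hm
    induction m, hm using Nat.le_induction with
    | base => exact hpn
    | succ m hm ih =>
      have hjump := (abs_lt.mp (hstep m hm)).1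
      exact not_lt.1 fun hlt => hnot (m + 1) (by omega) ⟨by linarith, hlt⟩
  have hh : 0 < h := (abs_nonneg _).trans_lt (hstep n le_rfl)
  have hlim : u + h ≤ t := ge_of_tendsto hp (eventually_atTop.2 ⟨n, hge⟩)
  linarith

lemma exists_mem_Ioo_of_tendsto_of_between {p : ℕ → ℝ} {t u h : ℝ} {n : ℕ}
    (hp : Tendsto p atTop (𝓝 t)) (hstep : ∀ m ≥ n, |p (m + 1) - p m| < h)
    (hbetween : t ≤ u ∧ u + h ≤ p n ∨ p n ≤ u ∧ u + h ≤ t) :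
    ∃ m ≥ n, p m ∈ Ioo u (u + h) := by
  rcases hbetween with ⟨htu, hpn⟩ | ⟨hpu, hut⟩
  · exact exists_mem_Ioo_of_tendsto_of_abs_sub_lt hp hstep htu hpn
  · have hstep' : ∀ m ≥ n, |-p (m + 1) - -p m| < h := fun m hm => by
      rw [← abs_neg]; convert hstep m hm using 2; ring
    obtain ⟨m, hm, hlo, hhi⟩ :=
      exists_mem_Ioo_of_tendsto_of_abs_sub_lt (u := -(u + h)) hp.neg hstep' (by linarith)
        (by linarith)
    exact ⟨m, hm, by linarith, by linarith⟩

def gridHoles (δ c : ℝ) : Set ℝ :=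
  ⋃ i ∈ Finset.range (⌊δ⁻¹⌋₊ + 1), Ioo (i * δ) (i * δ + c * δ)

lemma isOpen_gridHoles (δ c : ℝ) : IsOpen (gridHoles δ c) :=
  isOpen_biUnion fun _ _ => isOpen_Ioo

lemma volume_gridHoles_le {δ c : ℝ} (hδ : 0 < δ) (hδ1 : δ ≤ 1) (hc : 0 ≤ c) :
    volume (gridHoles δ c) ≤ ENNReal.ofReal (2 * c) := by
  have hfloor : (⌊δ⁻¹⌋₊ : ℝ) * δ ≤ 1 := by
    simpa [hδ.ne'] using mul_le_mul_of_nonneg_right (Nat.floor_le (inv_nonneg.2 hδ.le)) hδ.le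
  calc volume (gridHoles δ c)
      ≤ ∑ i ∈ Finset.range (⌊δ⁻¹⌋₊ + 1), volume (Ioo (i * δ) (i * δ + c * δ)) :=
        measure_biUnion_finset_le _ _
    _ = ENNReal.ofReal (((⌊δ⁻¹⌋₊ + 1 : ℕ) : ℝ) * (c * δ)) := by
        rw [ENNReal.ofReal_mul (by positivity), ENNReal.ofReal_natCast]
        simp [Real.volume_Ioo]
    _ ≤ ENNReal.ofReal (2 * c) := by
        apply ENNReal.ofReal_le_ofReal
        push_cast
        nlinarith [mul_le_mul_of_nonneg_left hfloor hc, mul_le_mul_of_nonneg_left hδ1 hc]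

lemma exists_Ioo_subset_gridHoles {x y δ c : ℝ} (hx : 0 ≤ x) (hy : y ≤ 1) (hδ : 0 < δ)
    (hc : c ≤ 1) (hxy : x + 2 * δ ≤ y) :
    ∃ u, Ioo u (u + c * δ) ⊆ gridHoles δ c ∧ x ≤ u ∧ u + c * δ ≤ y := by
  set i := ⌈x / δ⌉₊
  have hxi : x ≤ i * δ := (div_le_iff₀ hδ).1 (Nat.le_ceil _)
  have hix : i * δ < x + δ := by
    have := mul_lt_mul_of_pos_right (Nat.ceil_lt_add_one (div_nonneg hx hδ.le)) hδ
    rwa [add_mul, div_mul_cancel₀ _ hδ.ne', one_mul] at this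
  have hiy : i * δ + c * δ ≤ y := by nlinarith
  have hi : i ≤ ⌊δ⁻¹⌋₊ := Nat.le_floor (by rw [← one_div, le_div_iff₀ hδ]; nlinarith)
  exact ⟨i * δ, fun z hz => mem_iUnion₂.2 ⟨i, Finset.mem_range.2 (by omega), hz⟩, hxi, hiy⟩

lemma exists_mem_gridHoles_of_tendsto {p : ℕ → ℝ} {t δ c : ℝ} {n : ℕ}
    (hp : Tendsto p atTop (𝓝 t)) (hδ : 0 < δ) (hc : c ≤ 1)
    (hstep : ∀ m ≥ n, |p (m + 1) - p m| < c * δ) (hpn : p n ∈ Icc (0 : ℝ) 1)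
    (ht : t ∈ Icc (0 : ℝ) 1) (hdist : 2 * δ ≤ |p n - t|) :
    ∃ m ≥ n, p m ∈ gridHoles δ c := by
  suffices ∃ u, Ioo u (u + c * δ) ⊆ gridHoles δ c ∧
      (t ≤ u ∧ u + c * δ ≤ p n ∨ p n ≤ u ∧ u + c * δ ≤ t) by
    obtain ⟨u, hu, hbetween⟩ := this
    obtain ⟨m, hm, hmem⟩ := exists_mem_Ioo_of_tendsto_of_between hp hstep hbetween
    exact ⟨m, hm, hu hmem⟩
  rcases le_total (p n) t with hle | hle
  · obtain ⟨u, hu, hxu, huy⟩ := exists_Ioo_subset_gridHoles hpn.1 ht.2 hδ hc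
      (by rw [abs_sub_comm, abs_of_nonneg (sub_nonneg.2 hle)] at hdist; linarith)
    exact ⟨u, hu, Or.inr ⟨hxu, huy⟩⟩
  · obtain ⟨u, hu, hxu, huy⟩ := exists_Ioo_subset_gridHoles ht.1 hpn.2 hδ hc
      (by rw [abs_of_nonneg (sub_nonneg.2 hle)] at hdist; linarith)
    exact ⟨u, hu, Or.inl ⟨hxu, huy⟩⟩

/-- The factor `j + 1` pays for the `j` scales used at level `j`, so that level contributes
at most `2⁻¹ ^ (j + 2)` to the measure. -/
noncomputable def holeWidth (j : ℕ) : ℝ := 2⁻¹ ^ (j + 3) / (j + 1)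

lemma holeWidth_pos (j : ℕ) : 0 < holeWidth j := by
  unfold holeWidth; positivity

lemma holeWidth_le_one (j : ℕ) : holeWidth j ≤ 1 := by
  unfold holeWidth
  rw [div_le_one (by positivity)]
  calc (2⁻¹ : ℝ) ^ (j + 3) ≤ 1 := pow_le_one₀ (by norm_num) (by norm_num)
    _ ≤ j + 1 := by simp

def holeSet (x : ℕ → ℝ) : Set ℝ :=
  ⋃ j, ⋃ l ∈ Finset.range j, gridHoles (x j / 2 ^ (l + 3)) (holeWidth j)

lemma isOpen_holeSet (x : ℕ → ℝ) : IsOpen (holeSet x) :=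
  isOpen_iUnion fun _ => isOpen_biUnion fun _ _ => isOpen_gridHoles _ _

lemma volume_holeSet_le {x : ℕ → ℝ} (hx0 : ∀ j, 0 < x j) (hx1 : ∀ j, x j ≤ 1) :
    volume (holeSet x) ≤ 2⁻¹ := by
  have hj : ∀ j, volume (⋃ l ∈ Finset.range j, gridHoles (x j / 2 ^ (l + 3)) (holeWidth j))
      ≤ 2⁻¹ ^ (j + 2) := by
    intro j
    have hwidth : (j : ℝ) * (2 * holeWidth j) ≤ 2⁻¹ ^ (j + 2) := by
      unfold holeWidth
      rw [mul_div_assoc', mul_div_assoc', div_le_iff₀ (by positivity), pow_succ _ (j + 2)]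
      nlinarith [pow_pos (show (0 : ℝ) < 2⁻¹ by norm_num) (j + 2)]
    calc _ ≤ ∑ l ∈ Finset.range j, volume (gridHoles (x j / 2 ^ (l + 3)) (holeWidth j)) :=
          measure_biUnion_finset_le _ _
      _ ≤ ∑ l ∈ Finset.range j, ENNReal.ofReal (2 * holeWidth j) :=
          Finset.sum_le_sum fun l _ => volume_gridHoles_le (by have := hx0 j; positivity)
            (div_le_one_of_le₀ ((hx1 j).trans (one_le_pow₀ (by norm_num))) (by positivity))
            (holeWidth_pos j).le
      _ = ENNReal.ofReal (j * (2 * holeWidth j)) := by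
          rw [ENNReal.ofReal_mul (by positivity)]
          simp
      _ ≤ ENNReal.ofReal (2⁻¹ ^ (j + 2)) := ENNReal.ofReal_le_ofReal hwidth
      _ = 2⁻¹ ^ (j + 2) := by
          rw [ENNReal.ofReal_pow (by norm_num), ENNReal.ofReal_inv_of_pos (by norm_num)]
          simp
  calc volume (holeSet x) ≤ ∑' j, volume (⋃ l ∈ Finset.range j,
        gridHoles (x j / 2 ^ (l + 3)) (holeWidth j)) := measure_iUnion_le _
    _ ≤ ∑' j : ℕ, (2⁻¹ : ENNReal) ^ (j + 2) := ENNReal.tsum_le_tsum hj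
    _ = 2⁻¹ := by
        simp only [pow_add, ENNReal.tsum_mul_right, ENNReal.tsum_geometric_two]
        rw [pow_two, ← mul_assoc, ENNReal.mul_inv_cancel two_ne_zero ENNReal.ofNat_ne_top,
          one_mul]

lemma measure_diff_pos_of_lt {α : Type*} [MeasurableSpace α] {μ : Measure α} {s U : Set α}
    (h : μ U < μ s) : 0 < μ (s \ U) :=
  (tsub_pos_of_lt h).trans_le le_measure_sdiff

lemma exists_pos_abs_sub_succ_le_mul {a : ℕ → ℝ} (hdec : ∀ n ≥ 1, a (n + 1) < a n)
    (hsup : ∃ C : ℝ, ∀ m n : ℕ, 1 < n → n < m →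
      (a (m - 1) - a m) / (a (n - 1) - a n) ≤ C) :
    ∃ C > 0, ∀ n ≥ 1, ∀ m ≥ n, |a (m + 1) - a m| ≤ C * (a n - a (n + 1)) := by
  obtain ⟨C, hC⟩ := hsup
  refine ⟨max C 1, by positivity, fun n hn m hm => ?_⟩
  have hgap : 0 < a n - a (n + 1) := sub_pos.2 (hdec n hn)
  rw [abs_sub_comm, abs_of_pos (sub_pos.2 (hdec m (hn.trans hm)))]
  rcases hm.eq_or_lt with rfl | hlt
  · nlinarith [le_max_right C 1]
  · have h := hC (m + 1) (n + 1) (by omega) (by omega)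
    simp only [Nat.add_sub_cancel] at h
    rw [div_le_iff₀ hgap] at h
    nlinarith [le_max_left C 1]

lemma frequently_sub_succ_lt_mul {a : ℕ → ℝ} (hpos : ∀ᶠ n in atTop, 0 < a n)
    (hlimsup : limsup (fun n => a (n + 1) / a n) atTop = 1) {ε : ℝ} (hε : 0 < ε) :
    ∃ᶠ n in atTop, a n - a (n + 1) < ε * a n := by
  have hcobdd : IsCoboundedUnder (· ≤ ·) atTop (fun n => a (n + 1) / a n) := by
    refine (isBoundedUnder_of_eventually_ge (a := 0) ?_).isCoboundedUnder_flip
    filter_upwards [hpos, (tendsto_add_atTop_nat 1).eventually hpos] with n h1 h2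
    positivity
  have hfreq : ∃ᶠ n in atTop, 1 - ε < a (n + 1) / a n :=
    frequently_lt_of_lt_limsup hcobdd (by rw [hlimsup]; linarith)
  refine (hfreq.and_eventually hpos).mono fun n ⟨h, hn⟩ => ?_
  rw [lt_div_iff₀ hn] at h
  linarith

theorem not_forall_mem_Icc_diff_holeSet {a : ℕ → ℝ} {N : ℕ → ℕ} {s : ℕ → ℝ} {f : ℝ → ℝ}
    {L : ℝ} (hlim : Tendsto a atTop (𝓝 0)) (hN1 : ∀ j, 1 ≤ N j)
    (hstep : ∀ j, ∀ m ≥ N j, |a (m + 1) - a m| ≤ s j)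
    (hs : ∀ j, 8 * 4 ^ j * s j < holeWidth j * a (N j)) (hL : 1 < L)
    (hf : ∀ x y : ℝ, L⁻¹ * |x - y| ≤ |f x - f y| ∧ |f x - f y| ≤ L * |x - y|) :
    ¬ ∀ n ≥ 1, f (a n) ∈ Icc 0 1 \ holeSet (a ∘ N) := by
  intro hfE
  have hLpos : 0 < L := one_pos.trans hL
  have hlip : LipschitzWith L.toNNReal f := LipschitzWith.of_dist_le_mul fun x y => by
    simpa [Real.dist_eq, hLpos.le] using (hf x y).2
  have hp : Tendsto (fun m => f (a m)) atTop (𝓝 (f 0)) := (hlip.continuous.tendsto 0).comp hlim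
  have ht : f 0 ∈ Icc (0 : ℝ) 1 :=
    isClosed_Icc.mem_of_tendsto hp (eventually_atTop.2 ⟨1, fun n hn => (hfE n hn).1⟩)
  obtain ⟨j, hj⟩ := pow_unbounded_of_one_lt L one_lt_two
  obtain ⟨l, hlL, hLl⟩ := exists_nat_pow_near hL.le one_lt_two
  have hlj : l < j := (pow_lt_pow_iff_right₀ one_lt_two).1 (hlL.trans_lt hj)
  set n := N j
  set δ := a n / 2 ^ (l + 3)
  have hs0 : 0 ≤ s j := (abs_nonneg _).trans (hstep j n le_rfl)
  have han : 0 < a n := pos_of_mul_pos_right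
    ((by positivity : (0 : ℝ) ≤ 8 * 4 ^ j * s j).trans_lt (hs j)) (holeWidth_pos j).le
  have hδ : 0 < δ := by positivity
  have hscale : L * 2 ^ (l + 3) ≤ 8 * 4 ^ j := by
    have : L * 2 ^ l ≤ 2 ^ j * 2 ^ j :=
      mul_le_mul hj.le (hlL.trans hj.le) (by positivity) (by positivity)
    rw [pow_add, show (4 : ℝ) ^ j = 2 ^ j * 2 ^ j by rw [← mul_pow]; norm_num]
    nlinarith
  have hsteps : ∀ m ≥ n, |f (a (m + 1)) - f (a m)| < holeWidth j * δ := fun m hm => calc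
    _ ≤ L * |a (m + 1) - a m| := (hf _ _).2
    _ ≤ L * s j := by gcongr; exact hstep j m hm
    _ < holeWidth j * δ := by
        rw [mul_div_assoc', lt_div_iff₀ (by positivity)]
        nlinarith [hs j, mul_le_mul_of_nonneg_right hscale hs0]
  have hdist : 2 * δ ≤ |f (a n) - f 0| := calc
    2 * δ ≤ L⁻¹ * a n := by
        have hδa : δ * 2 ^ (l + 3) = a n := div_mul_cancel₀ _ (by positivity)
        rw [inv_mul_eq_div, le_div_iff₀ hLpos, ← hδa, show l + 3 = l + 1 + 2 by ring, pow_add]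
        nlinarith
    _ = L⁻¹ * |a n - 0| := by rw [sub_zero, abs_of_pos han]
    _ ≤ |f (a n) - f 0| := (hf _ _).1
  obtain ⟨m, hm, hmem⟩ := exists_mem_gridHoles_of_tendsto hp hδ (holeWidth_le_one j) hsteps
    (hfE n (hN1 j)).1 ht hdist
  refine (hfE m ((hN1 j).trans hm)).2 ?_
  simp only [holeSet, mem_iUnion]
  exact ⟨j, l, Finset.mem_range.2 hlj, hmem⟩

theorem stmt6 (a : ℕ → ℝ) (hpos : ∀ n ≥ 1, 0 < a n)
    (hdec : ∀ n ≥ 1, a (n + 1) < a n)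
    (hlim : Tendsto a atTop (nhds 0))
    (hsup : ∃ C : ℝ, ∀ m n : ℕ, 1 < n → n < m →
      (a (m - 1) - a m) / (a (n - 1) - a n) ≤ C)
    (hlimsup : Filter.limsup (fun n => a (n + 1) / a n) atTop = 1) :
    ∃ E : Set ℝ, IsCompact E ∧ 0 < volume E ∧
      ¬ ∃ f : ℝ → ℝ, (∃ L : ℝ, 1 < L ∧ ∀ x y : ℝ,
          L⁻¹ * |x - y| ≤ |f x - f y| ∧ |f x - f y| ≤ L * |x - y|) ∧
        ∀ n ≥ 1, f (a n) ∈ E := by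
  obtain ⟨C, hC, hstep⟩ := exists_pos_abs_sub_succ_le_mul hdec hsup
  have hfreq (j : ℕ) := frequently_sub_succ_lt_mul (eventually_atTop.2 ⟨1, hpos⟩) hlimsup
    (div_pos (holeWidth_pos j) (by positivity : (0 : ℝ) < 8 * 4 ^ j * C))
  choose N hN using fun j => ((hfreq j).and_eventually ((eventually_ge_atTop 1).and
    (hlim.eventually (eventually_le_nhds one_pos)))).exists
  refine ⟨Icc 0 1 \ holeSet (a ∘ N), isCompact_Icc.diff (isOpen_holeSet _), ?_, ?_⟩
  · refine measure_diff_pos_of_lt ((volume_holeSet_le (fun j => hpos _ (hN j).2.1)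
      fun j => (hN j).2.2).trans_lt ?_)
    simp [ENNReal.inv_lt_one]
  · rintro ⟨f, ⟨L, hL, hf⟩, hfE⟩
    refine not_forall_mem_Icc_diff_holeSet hlim (fun j => (hN j).2.1)
      (fun j m hm => hstep _ (hN j).2.1 m hm) (fun j => ?_) hL hf hfE
    have h := (hN j).1
    rw [div_mul_eq_mul_div, lt_div_iff₀ (by positivity)] at h
    linarith
end

section
/- Let (a_n)_{n≥1} be a strictly decreasing sequence of positive reals with a_n → 0 satisfying sup_{m > n > 1} (a_{m-1} - a_m)/(a_{n-1} - a_n) < ∞. Then (a_n) is bi-Lipschitz measure universal if and only if limsup_{n→∞} a_{n+1}/a_n < 1. -/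
/-!
If `a (n + 1) ≤ ρ * a n` with `ρ < 1`, take a Lebesgue density point `d` of `E` and a small
scale `l`: each point `d + l * a n` lies within `δ * l * a n` of some `e n ∈ E`, with `δ ≪ 1 - ρ`.
By lacunarity the correction `e n - (d + l * a n)` is `l / 2`-Lipschitz on `{a n}`; adding a
Lipschitz extension of it to `x ↦ d + l * x` gives a bi-Lipschitz map sending `a n` to `e n`.

Conversely, if the ratios `a (n + 1) / a n` come arbitrarily close to `1`, choose levels `N k`
whose gap `a (N k) - a (N k + 1)` is tiny compared with `a (N k)`; by the gap condition all later
gaps are at most `C` times as large. Remove from `[0, 1]`, for every `k`, a periodic family of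
intervals of period `s k = a (N k) / (2 (k + 1))` and width `w k = (k + 1) C gap`, with
`w k / s k ≤ 8⁻¹ ^ (k + 1)`, so that the remaining set `E` has positive measure. For an
`L`-bi-Lipschitz `f` with `L ≤ k + 1`, the points `f (a n)`, `n ≥ N k`, move by steps at most
`w k`, so they cannot cross a removed interval and stay within `s k` of each other, whereas
bi-Lipschitz forces them to spread over more than `a (N k) / (2 L) ≥ s k`.
-/

open MeasureTheory Filter Set

def BiLipschitzWith (L : ℝ) (f : ℝ → ℝ) : Prop :=
  ∀ x y, L⁻¹ * |x - y| ≤ |f x - f y| ∧ |f x - f y| ≤ L * |x - y|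

def periodicIntervals (s w : ℝ) : Set ℝ := ⋃ j : ℤ, Icc (j * s) (j * s + w)

lemma measurableSet_periodicIntervals (s w : ℝ) : MeasurableSet (periodicIntervals s w) :=
  .iUnion fun _ ↦ measurableSet_Icc

namespace periodicIntervals

variable {s w x y : ℝ}

lemma floor_mul_add_lt_of_notMem (hs : 0 < s) (hx : x ∉ periodicIntervals s w) :
    ⌊x / s⌋ * s + w < x ∧ x < (⌊x / s⌋ + 1) * s := by
  have hlo : ⌊x / s⌋ * s ≤ x := (le_div_iff₀ hs).1 (Int.floor_le _)
  refine ⟨lt_of_not_ge fun h ↦ hx (mem_iUnion.2 ⟨⌊x / s⌋, hlo, h⟩), ?_⟩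
  exact (div_lt_iff₀ hs).1 (Int.lt_floor_add_one _)

lemma floor_div_eq_of_abs_sub_le (hs : 0 < s) (hx : x ∉ periodicIntervals s w)
    (hy : y ∉ periodicIntervals s w) (hxy : |x - y| ≤ w) : ⌊x / s⌋ = ⌊y / s⌋ := by
  obtain ⟨hx₁, hx₂⟩ := floor_mul_add_lt_of_notMem hs hx
  obtain ⟨hy₁, hy₂⟩ := floor_mul_add_lt_of_notMem hs hy
  obtain ⟨h₁, h₂⟩ := abs_le.1 hxy
  by_contra hne
  rcases lt_or_gt_of_ne hne with h | h
  · have : ((⌊x / s⌋ : ℤ) : ℝ) + 1 ≤ ⌊y / s⌋ := by exact_mod_cast h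
    nlinarith
  · have : ((⌊y / s⌋ : ℤ) : ℝ) + 1 ≤ ⌊x / s⌋ := by exact_mod_cast h
    nlinarith

/-- A walk with steps at most `w` cannot jump over an interval of length `w`. -/
lemma abs_sub_lt_of_forall_notMem (hs : 0 < s) (z : ℕ → ℝ) {N M : ℕ} (hNM : N ≤ M)
    (hstep : ∀ i, N ≤ i → i < M → |z (i + 1) - z i| ≤ w)
    (hz : ∀ i, N ≤ i → i ≤ M → z i ∉ periodicIntervals s w) : |z M - z N| < s := by
  have hfloor : ⌊z M / s⌋ = ⌊z N / s⌋ := by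
    induction M, hNM using Nat.le_induction with
    | base => rfl
    | succ M hNM ih =>
      rw [← ih (fun i hi hiM ↦ hstep i hi (by omega)) (fun i hi hiM ↦ hz i hi (by omega))]
      exact floor_div_eq_of_abs_sub_le hs (hz _ (by omega) le_rfl) (hz _ hNM (by omega))
        (hstep M hNM (by omega))
  have := Int.abs_sub_lt_one_of_floor_eq_floor hfloor
  rwa [← sub_div, abs_div, abs_of_pos hs, div_lt_one hs] at this

lemma volume_inter_Icc_le (hs : 0 < s) (hs1 : s ≤ 1) (hw : 0 ≤ w) (hws : w ≤ s) :
    volume (periodicIntervals s w ∩ Icc 0 1) ≤ ENNReal.ofReal (3 * (w / s)) := by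
  set m : ℤ := ⌊1 / s⌋
  have hm : 1 ≤ m := Int.le_floor.2 (by rw [Int.cast_one, le_div_iff₀ hs]; linarith)
  have hcover :
      periodicIntervals s w ∩ Icc 0 1 ⊆ ⋃ j ∈ Finset.Icc (-1) m, Icc (j * s) (j * s + w) := by
    rintro x ⟨hx, hx₀, hx₁⟩
    obtain ⟨j, hj₁, hj₂⟩ := mem_iUnion.1 hx
    refine mem_biUnion (Finset.mem_Icc.2 ⟨?_, Int.le_floor.2 ?_⟩) ⟨hj₁, hj₂⟩
    · by_contra! hj
      have : (j : ℝ) ≤ -2 := by exact_mod_cast (by omega : j ≤ -2)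
      nlinarith
    · rw [le_div_iff₀ hs]; linarith
  have hcard : ((Finset.Icc (-1) m).card : ℝ) ≤ 3 / s := by
    have hc : ((Finset.Icc (-1) m).card : ℤ) = m + 2 := by rw [Int.card_Icc]; omega
    have hm' : (m : ℝ) ≤ 1 / s := Int.floor_le _
    have : (1 : ℝ) ≤ 1 / s := by rw [le_div_iff₀ hs]; linarith
    rw [← Int.cast_natCast, hc]; push_cast
    calc (m : ℝ) + 2 ≤ 1 / s + 2 * (1 / s) := by linarith
      _ = 3 / s := by ring
  calc volume (periodicIntervals s w ∩ Icc 0 1)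
      ≤ ∑ j ∈ Finset.Icc (-1) m, volume (Icc ((j : ℝ) * s) (j * s + w)) :=
        (measure_mono hcover).trans (measure_biUnion_finset_le _ _)
    _ = (Finset.Icc (-1) m).card * ENNReal.ofReal w := by simp [Real.volume_Icc]
    _ ≤ ENNReal.ofReal (3 * (w / s)) := by
        rw [← ENNReal.ofReal_natCast, ← ENNReal.ofReal_mul (by positivity)]
        refine ENNReal.ofReal_le_ofReal ?_
        calc _ ≤ 3 / s * w := mul_le_mul_of_nonneg_right hcard hw
          _ = 3 * (w / s) := by ring

end periodicIntervals

lemma volume_Icc_diff_iUnion_periodicIntervals_pos (s w : ℕ → ℝ) (hs : ∀ k, 0 < s k)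
    (hs1 : ∀ k, s k ≤ 1) (hw : ∀ k, 0 ≤ w k) (hws : ∀ k, w k ≤ (1 / 8) ^ (k + 1) * s k) :
    0 < volume (Icc 0 1 \ ⋃ k, periodicIntervals (s k) (w k)) := by
  have hk : ∀ k, volume (periodicIntervals (s k) (w k) ∩ Icc 0 1)
      ≤ ENNReal.ofReal (3 / 8 * (1 / 8) ^ k) := fun k ↦ by
    have hε : ((1 : ℝ) / 8) ^ (k + 1) ≤ 1 := pow_le_one₀ (by norm_num) (by norm_num)
    have hratio : w k / s k ≤ (1 / 8) ^ (k + 1) := (div_le_iff₀ (hs k)).2 (hws k)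
    refine (periodicIntervals.volume_inter_Icc_le (hs k) (hs1 k) (hw k)
      ((hws k).trans (by nlinarith [hs k]))).trans (ENNReal.ofReal_le_ofReal ?_)
    rw [pow_succ] at hratio
    linarith
  have hsmall :
      volume ((⋃ k, periodicIntervals (s k) (w k)) ∩ Icc 0 1) ≤ ENNReal.ofReal (3 / 7) :=
    calc volume ((⋃ k, periodicIntervals (s k) (w k)) ∩ Icc 0 1)
        ≤ ∑' k, ENNReal.ofReal (3 / 8 * (1 / 8) ^ k) := by
          rw [iUnion_inter]
          exact (measure_iUnion_le _).trans (ENNReal.tsum_le_tsum hk)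
      _ = ENNReal.ofReal (3 / 7) := by
          rw [← ENNReal.ofReal_tsum_of_nonneg (fun k ↦ by positivity)
            ((summable_geometric_of_lt_one (by norm_num) (by norm_num)).mul_left _),
            tsum_mul_left, tsum_geometric_of_lt_one (by norm_num) (by norm_num)]
          norm_num
  calc (0 : ENNReal) < ENNReal.ofReal 1 - ENNReal.ofReal (3 / 7) := by
        rw [← ENNReal.ofReal_sub _ (by norm_num)]; norm_num
    _ ≤ volume (Icc (0 : ℝ) 1) - volume ((⋃ k, periodicIntervals (s k) (w k)) ∩ Icc 0 1) := by
        rw [Real.volume_Icc, sub_zero]; exact tsub_le_tsub_left hsmall _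
    _ ≤ volume (Icc 0 1 \ ⋃ k, periodicIntervals (s k) (w k)) := by
        rw [← sdiff_inter_self_eq_sdiff]; exact le_measure_sdiff

lemma exists_forall_le_of_limsup_lt_one (u : ℕ → ℝ) (hu : ∀ n ≥ 1, u n < 1)
    (h : limsup u atTop < 1) : ∃ ρ, 0 ≤ ρ ∧ ρ < 1 ∧ ∀ n ≥ 1, u n ≤ ρ := by
  obtain ⟨ρ₁, hρ₁, hρ₁1⟩ := exists_between (max_lt h zero_lt_one)
  have hbdd : IsBoundedUnder (· ≤ ·) atTop u := isBoundedUnder_of_eventually_le (a := 1) <| by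
    filter_upwards [eventually_ge_atTop 1] with n hn using (hu n hn).le
  obtain ⟨N, hN⟩ := eventually_atTop.1 ((eventually_lt_of_limsup_lt
    ((le_max_left _ _).trans_lt hρ₁) hbdd).and (eventually_ge_atTop 1))
  have hne : (Finset.Icc 1 N).Nonempty := ⟨N, Finset.mem_Icc.2 ⟨(hN N le_rfl).2, le_rfl⟩⟩
  refine ⟨max ρ₁ ((Finset.Icc 1 N).sup' hne u),
    le_max_of_le_left ((le_max_right _ _).trans hρ₁.le),
    max_lt hρ₁1 ((Finset.sup'_lt_iff hne).2 fun n hn ↦ hu n (Finset.mem_Icc.1 hn).1),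
    fun n hn ↦ ?_⟩
  rcases le_or_gt n N with hnN | hNn
  · exact le_max_of_le_right (Finset.le_sup' u (Finset.mem_Icc.2 ⟨hn, hnN⟩))
  · exact le_max_of_le_left (hN n hNn.le).1.le

/-- Any Lebesgue density point of `E` serves as `d`. -/
lemma exists_forall_exists_mem_abs_sub_le {E : Set ℝ} (hE : 0 < volume E) {δ : ℝ}
    (hδ : 0 < δ) (hδ1 : δ ≤ 1) :
    ∃ d r₀, 0 < r₀ ∧ ∀ t, 0 < t → t ≤ r₀ → ∃ e ∈ E, |e - (d + t)| ≤ δ * t := by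
  have : (ae (volume.restrict E)).NeBot := ae_neBot.2 (Measure.restrict_eq_zero.not.2 hE.ne')
  obtain ⟨d, hd⟩ := (Besicovitch.ae_tendsto_measure_inter_div volume E).exists
  have hlt : ENNReal.ofReal (1 - δ / 2) < 1 := by
    rw [← ENNReal.ofReal_one]; exact (ENNReal.ofReal_lt_ofReal_iff one_pos).2 (by linarith)
  obtain ⟨r₁, hr₁, hr₁sub⟩ :=
    mem_nhdsGT_iff_exists_Ioc_subset.1 (hd.eventually (lt_mem_nhds hlt))
  refine ⟨d, r₁ / 2, half_pos hr₁, fun t ht htr ↦ ?_⟩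
  by_contra! hfar
  set B := Metric.closedBall d (2 * t)
  set I := Icc (d + t - δ * t) (d + t + δ * t)
  have hIB : I ⊆ B := by
    rw [show B = _ from Real.closedBall_eq_Icc]
    exact Icc_subset_Icc (by nlinarith) (by nlinarith)
  have hEB : E ∩ B ⊆ B \ I := fun x ⟨hxE, hxB⟩ ↦
    ⟨hxB, fun ⟨h₁, h₂⟩ ↦ (hfar x hxE).not_ge (abs_le.2 ⟨by linarith, by linarith⟩)⟩
  have hvolB : volume B = ENNReal.ofReal (4 * t) := by rw [Real.volume_closedBall]; ring_nf
  have hvolI : volume I = ENNReal.ofReal (2 * δ * t) := by rw [Real.volume_Icc]; ring_nf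
  have hsmall : volume (E ∩ B) / volume B ≤ ENNReal.ofReal (1 - δ / 2) :=
    calc volume (E ∩ B) / volume B ≤ (volume B - volume I) / volume B := by
          gcongr; exact (measure_mono hEB).trans_eq
            (measure_sdiff hIB measurableSet_Icc.nullMeasurableSet measure_Icc_lt_top.ne)
      _ = ENNReal.ofReal (1 - δ / 2) := by
          rw [hvolB, hvolI, ← ENNReal.ofReal_sub _ (by positivity),
            ← ENNReal.ofReal_div_of_pos (by positivity)]
          congr 1; field_simp; ring
  exact (hr₁sub ⟨by positivity, by linarith⟩ : _ < _).not_ge hsmall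

lemma abs_sub_le_of_lacunary {S : Set ℝ} {ψ : ℝ → ℝ} {ρ ε c : ℝ} (hc : 0 ≤ c)
    (hpos : ∀ x ∈ S, 0 < x) (hlac : ∀ x ∈ S, ∀ y ∈ S, y < x → y ≤ ρ * x)
    (hψ : ∀ x ∈ S, |ψ x| ≤ ε * x) (hεc : 2 * ε ≤ c * (1 - ρ)) :
    ∀ x ∈ S, ∀ y ∈ S, |ψ x - ψ y| ≤ c * |x - y| := by
  intro x hx y hy
  wlog hyx : y < x generalizing x y
  · rcases (not_lt.1 hyx).eq_or_lt with rfl | hxy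
    · simp
    · rw [abs_sub_comm, abs_sub_comm x]; exact this y hy x hx hxy
  have hε : 0 ≤ ε := nonneg_of_mul_nonneg_left ((abs_nonneg _).trans (hψ x hx)) (hpos x hx)
  have hρ := hlac x hx y hy hyx
  calc |ψ x - ψ y| ≤ |ψ x| + |ψ y| := abs_sub _ _
    _ ≤ ε * x + ε * y := add_le_add (hψ x hx) (hψ y hy)
    _ ≤ c * (1 - ρ) * x := by nlinarith [hpos x hx]
    _ ≤ c * |x - y| := by rw [abs_of_pos (sub_pos.2 hyx)]; nlinarith

lemma exists_bilipschitz_eqOn {S : Set ℝ} {g : ℝ → ℝ} {l : ℝ} (d : ℝ) (hl : 0 < l)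
    (hl1 : l ≤ 1) (hg : ∀ x ∈ S, ∀ y ∈ S, |g x - g y| ≤ l / 2 * |x - y|) :
    ∃ f, (∃ L, 1 < L ∧ BiLipschitzWith L f) ∧ EqOn f (fun x ↦ d + l * x + g x) S := by
  have hgS : LipschitzOnWith (l / 2).toNNReal g S := by
    refine LipschitzOnWith.of_dist_le_mul fun x hx y hy ↦ ?_
    rw [Real.coe_toNNReal _ (by positivity)]; exact hg x hx y hy
  obtain ⟨G, hG, hGg⟩ := hgS.extend_real
  have hGxy (x y : ℝ) : |G x - G y| ≤ l / 2 * |x - y| := by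
    simpa [Real.coe_toNNReal _ (half_pos hl).le, Real.dist_eq] using hG.dist_le_mul x y
  refine ⟨fun x ↦ d + l * x + G x, ⟨2 / l, by rw [lt_div_iff₀ hl]; linarith, fun x y ↦ ?_⟩,
    fun x hx ↦ by simp only [hGg hx]⟩
  have hsplit : d + l * x + G x - (d + l * y + G y) = l * (x - y) + (G x - G y) := by ring
  have hlxy : |l * (x - y)| = l * |x - y| := by rw [abs_mul, abs_of_pos hl]
  have hup := abs_add_le (l * (x - y)) (G x - G y)
  have hlow := abs_sub_abs_le_abs_add (l * (x - y)) (G x - G y)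
  rw [hsplit, inv_div]
  have hxy := abs_nonneg (x - y)
  refine ⟨by nlinarith [hGxy x y], ?_⟩
  rw [div_mul_eq_mul_div, le_div_iff₀ hl]
  nlinarith [hGxy x y, mul_le_mul_of_nonneg_right (mul_le_one₀ hl1 hl.le hl1) hxy]

section Sequence

variable {a : ℕ → ℝ}

lemma exists_gap_le_mul_gap (hdec : ∀ n ≥ 1, a (n + 1) < a n)
    (hsup : ∃ C : ℝ, ∀ m n : ℕ, 1 < n → n < m → (a (m - 1) - a m) / (a (n - 1) - a n) ≤ C) :
    ∃ C : ℝ, 0 < C ∧ ∀ N ≥ 1, ∀ i ≥ N, a i - a (i + 1) ≤ C * (a N - a (N + 1)) := by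
  obtain ⟨C, hC⟩ := hsup
  refine ⟨max C 1, one_pos.trans_le (le_max_right _ _), fun N hN i hi ↦ ?_⟩
  have hgap : 0 < a N - a (N + 1) := sub_pos.2 (hdec N hN)
  rcases hi.eq_or_lt with rfl | hlt
  · exact le_mul_of_one_le_left hgap.le (le_max_right _ _)
  · have := (hC (i + 1) (N + 1) (by omega) (by omega)).trans (le_max_left C 1)
    simpa only [Nat.add_sub_cancel, div_le_iff₀ hgap] using this

lemma frequently_sub_le_mul (hpos : ∀ n ≥ 1, 0 < a n)
    (hls : 1 ≤ limsup (fun n ↦ a (n + 1) / a n) atTop) {δ : ℝ} (hδ : 0 < δ) :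
    ∃ᶠ n in atTop, a n - a (n + 1) ≤ δ * a n := by
  have hcobdd : IsCoboundedUnder (· ≤ ·) atTop (fun n ↦ a (n + 1) / a n) :=
    isCoboundedUnder_le_of_eventually_le atTop (x := 0) <| by
      filter_upwards [eventually_ge_atTop 1] with n hn
      exact div_nonneg (hpos (n + 1) (by omega)).le (hpos n hn).le
  refine ((frequently_lt_of_lt_limsup hcobdd (by linarith : 1 - δ < _)).and_eventually
    (eventually_ge_atTop 1)).mono fun n ⟨hn, hn1⟩ ↦ ?_
  rw [lt_div_iff₀ (hpos n hn1)] at hn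
  linarith

lemma exists_apply_mem_periodicIntervals (hpos : ∀ n ≥ 1, 0 < a n)
    (hdec : ∀ n ≥ 1, a (n + 1) < a n) (hlim : Tendsto a atTop (nhds 0)) {N : ℕ} (hN : 1 ≤ N)
    {C : ℝ} (hgap : ∀ i ≥ N, a i - a (i + 1) ≤ C * (a N - a (N + 1)))
    {L : ℝ} {f : ℝ → ℝ} (hL : 0 < L) (hf : BiLipschitzWith L f) {s w : ℝ} (hs : 0 < s)
    (hw : L * (C * (a N - a (N + 1))) ≤ w) (hsL : L * s ≤ a N / 2) :
    ∃ n ≥ N, f (a n) ∈ periodicIntervals s w := by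
  by_contra! hnot
  obtain ⟨M, haM, hNM⟩ :=
    ((hlim.eventually (gt_mem_nhds (half_pos (hpos N hN)))).and (eventually_ge_atTop N)).exists
  have hclose : |f (a M) - f (a N)| < s := by
    refine periodicIntervals.abs_sub_lt_of_forall_notMem hs (f ∘ a) hNM (fun i hi _ ↦ ?_)
      (fun i hi _ ↦ hnot i hi)
    calc |f (a (i + 1)) - f (a i)| ≤ L * |a (i + 1) - a i| := (hf _ _).2
      _ = L * (a i - a (i + 1)) := by
          rw [abs_sub_comm, abs_of_pos (sub_pos.2 (hdec i (hN.trans hi)))]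
      _ ≤ w := (mul_le_mul_of_nonneg_left (hgap i hi) hL.le).trans hw
  have hfar := (hf (a M) (a N)).1
  have haN := hpos N hN
  rw [abs_of_neg (by linarith : a M - a N < 0), inv_mul_le_iff₀ hL] at hfar
  nlinarith

theorem limsup_lt_one_of_bilipschitz_universal (hpos : ∀ n ≥ 1, 0 < a n)
    (hdec : ∀ n ≥ 1, a (n + 1) < a n) (hlim : Tendsto a atTop (nhds 0))
    (hsup : ∃ C : ℝ, ∀ m n : ℕ, 1 < n → n < m → (a (m - 1) - a m) / (a (n - 1) - a n) ≤ C)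
    (hU : ∀ E : Set ℝ, MeasurableSet E → 0 < volume E →
      ∃ f : ℝ → ℝ, (∃ L : ℝ, 1 < L ∧ BiLipschitzWith L f) ∧ ∀ n ≥ 1, f (a n) ∈ E) :
    limsup (fun n ↦ a (n + 1) / a n) atTop < 1 := by
  by_contra! hls
  obtain ⟨C, hC, hgap⟩ := exists_gap_le_mul_gap hdec hsup
  have hlevel (k : ℕ) : ∃ N, (1 ≤ N ∧ a N ≤ 1) ∧
      a N - a (N + 1) ≤ (1 / 8) ^ (k + 1) / (2 * (k + 1) ^ 2 * C) * a N :=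
    ((frequently_sub_le_mul hpos hls (by positivity)).and_eventually
      ((eventually_ge_atTop 1).and (hlim.eventually (ge_mem_nhds one_pos)))).exists.imp
      fun _ h ↦ ⟨h.2, h.1⟩
  choose N hN hNgap using hlevel
  set s : ℕ → ℝ := fun k ↦ a (N k) / (2 * (k + 1))
  set w : ℕ → ℝ := fun k ↦ (k + 1) * (C * (a (N k) - a (N k + 1)))
  have hgapN (k : ℕ) : 0 ≤ C * (a (N k) - a (N k + 1)) :=
    mul_nonneg hC.le (sub_pos.2 (hdec _ (hN k).1)).le
  have hs (k : ℕ) : 0 < s k := div_pos (hpos _ (hN k).1) (by positivity)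
  have hws (k : ℕ) : w k ≤ (1 / 8) ^ (k + 1) * s k :=
    calc w k ≤ (k + 1) * (C * ((1 / 8) ^ (k + 1) / (2 * (k + 1) ^ 2 * C) * a (N k))) := by
          simp only [w]; gcongr; exact hNgap k
      _ = (1 / 8) ^ (k + 1) * s k := by simp only [s]; field_simp
  obtain ⟨f, ⟨L, hL, hf⟩, hfE⟩ := hU _
    (measurableSet_Icc.diff (.iUnion fun k ↦ measurableSet_periodicIntervals (s k) (w k)))
    (volume_Icc_diff_iUnion_periodicIntervals_pos s w hs
      (fun k ↦ div_le_one_of_le₀ (by linarith [(hN k).2]) (by positivity))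
      (fun k ↦ mul_nonneg (by positivity) (hgapN k)) hws)
  set k := ⌈L⌉₊
  have hLk : L ≤ k + 1 := by linarith [Nat.le_ceil L]
  obtain ⟨n, hn, hmem⟩ := exists_apply_mem_periodicIntervals hpos hdec hlim (hN k).1
    (hgap _ (hN k).1) (by linarith) hf (hs k) (mul_le_mul_of_nonneg_right hLk (hgapN k))
    (by calc L * s k ≤ (k + 1) * s k := mul_le_mul_of_nonneg_right hLk (hs k).le
          _ = a (N k) / 2 := by simp only [s]; field_simp)
  exact (hfE n ((hN k).1.trans hn)).2 (mem_iUnion.2 ⟨k, hmem⟩)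

theorem bilipschitz_universal_of_limsup_lt_one (hpos : ∀ n ≥ 1, 0 < a n)
    (hdec : ∀ n ≥ 1, a (n + 1) < a n) (hls : limsup (fun n ↦ a (n + 1) / a n) atTop < 1)
    {E : Set ℝ} (hE : 0 < volume E) :
    ∃ f : ℝ → ℝ, (∃ L : ℝ, 1 < L ∧ BiLipschitzWith L f) ∧ ∀ n ≥ 1, f (a n) ∈ E := by
  obtain ⟨ρ, hρ0, hρ1, hρ⟩ := exists_forall_le_of_limsup_lt_one _
    (fun n hn ↦ (div_lt_one (hpos n hn)).2 (hdec n hn)) hls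
  obtain ⟨d, r₀, hr₀, hnear⟩ :=
    exists_forall_exists_mem_abs_sub_le hE (δ := (1 - ρ) / 8) (by linarith) (by linarith)
  have hanti : StrictAntiOn a (Ici 1) :=
    strictAntiOn_Ici_of_lt_pred fun m hm ↦ by
      simpa [Nat.sub_add_cancel (by omega : 1 ≤ m)] using hdec (m - 1) (by omega)
  set l := min 1 (r₀ / a 1)
  have hl : 0 < l := lt_min one_pos (div_pos hr₀ (hpos 1 le_rfl))
  have hS : ∀ x ∈ a '' Ici 1, 0 < x ∧ l * x ≤ r₀ := by
    rintro _ ⟨n, hn, rfl⟩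
    refine ⟨hpos n hn, ?_⟩
    calc l * a n ≤ r₀ / a 1 * a 1 :=
          mul_le_mul (min_le_right _ _) (hanti.antitoneOn (mem_Ici.2 le_rfl) hn hn)
            (hpos n hn).le (div_pos hr₀ (hpos 1 le_rfl)).le
      _ = r₀ := div_mul_cancel₀ _ (hpos 1 le_rfl).ne'
  have hchoice (x : ℝ) :
      ∃ e, x ∈ a '' Ici 1 → e ∈ E ∧ |e - (d + l * x)| ≤ (1 - ρ) / 8 * l * x := by
    by_cases hx : x ∈ a '' Ici 1
    · obtain ⟨e, he, hex⟩ := hnear (l * x) (mul_pos hl (hS x hx).1) (hS x hx).2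
      exact ⟨e, fun _ ↦ ⟨he, by rwa [mul_assoc]⟩⟩
    · exact ⟨0, fun h ↦ absurd h hx⟩
  choose e he using hchoice
  have hlac : ∀ x ∈ a '' Ici 1, ∀ y ∈ a '' Ici 1, y < x → y ≤ ρ * x := by
    rintro _ ⟨m, hm, rfl⟩ _ ⟨n, hn, rfl⟩ hlt
    have hmn : m < n := (hanti.lt_iff_gt hn hm).1 hlt
    calc a n ≤ a (m + 1) := hanti.antitoneOn (by simp) hn hmn
      _ ≤ ρ * a m := (div_le_iff₀ (hpos m hm)).1 (hρ m hm)
  obtain ⟨f, hf, hfe⟩ := exists_bilipschitz_eqOn d hl (min_le_left _ _)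
    (abs_sub_le_of_lacunary (by positivity) (fun x hx ↦ (hS x hx).1) hlac
      (fun x hx ↦ (he x hx).2) (by nlinarith))
  refine ⟨f, hf, fun n hn ↦ ?_⟩
  have hx : a n ∈ a '' Ici 1 := mem_image_of_mem a hn
  simpa only [hfe hx, add_sub_cancel] using (he _ hx).1

end Sequence

theorem stmt8 (a : ℕ → ℝ) (hpos : ∀ n ≥ 1, 0 < a n)
    (hdec : ∀ n ≥ 1, a (n + 1) < a n)
    (hlim : Tendsto a atTop (nhds 0))
    (hsup : ∃ C : ℝ, ∀ m n : ℕ, 1 < n → n < m →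
      (a (m - 1) - a m) / (a (n - 1) - a n) ≤ C) :
    (∀ E : Set ℝ, MeasurableSet E → 0 < volume E →
        ∃ f : ℝ → ℝ, (∃ L : ℝ, 1 < L ∧ ∀ x y : ℝ,
            L⁻¹ * |x - y| ≤ |f x - f y| ∧ |f x - f y| ≤ L * |x - y|) ∧
          ∀ n ≥ 1, f (a n) ∈ E) ↔
      Filter.limsup (fun n => a (n + 1) / a n) atTop < 1 :=
  ⟨limsup_lt_one_of_bilipschitz_universal hpos hdec hlim hsup,
    fun hls _ _ hE ↦ bilipschitz_universal_of_limsup_lt_one hpos hdec hls hE⟩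
end

section
/- Let t ∈ (1/2, 1), 0 < ε < t - 1/2, and let M be an even integer with M > 2/ε. Then for every interval I = [a,b] with a < b and every Lebesgue measurable set E with L(E ∩ I) ≥ t · L(I), there exists an integer j with 1 ≤ j ≤ M - 2 such that L(E ∩ I_j)/L(I_j) ≥ t - ε and L(E ∩ I_{j+2}) > 0, where I_j = [a + (j-1)(b-a)/M, a + j(b-a)/M]. -/
/-!
Let `h = (b - a) / M`, let `s k` be the measure of `E` in the `k`-th cell and `w k = s k - (t - ε) h`.
If the conclusion fails, a cell with `w k > 0` forces `E` to be null two cells later, so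
`w k + w (k + 2) ≤ 0` because `t - ε ≥ 1/2`. Along steps of two the positive excess therefore
cancels, and `∑ w k` is at most the positive parts of the last two terms, i.e. `2 (1 - t + ε) h`.
With `∑ s k ≥ t M h` this gives `ε M < 2`, contradicting `M > 2 / ε`.
-/

open MeasureTheory Set

theorem sum_range_add_two_le_posPart_add_posPart {α : Type*} [AddCommGroup α] [LinearOrder α]
    [IsOrderedAddMonoid α] {w : ℕ → α} {n : ℕ}
    (hw : ∀ k < n, 0 < w k → w k + w (k + 2) ≤ 0) :
    ∑ k ∈ Finset.range (n + 2), w k ≤ (w n)⁺ + (w (n + 1))⁺ := by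
  induction n with
  | zero => simpa [Finset.sum_range_succ] using add_le_add (le_posPart _) (le_posPart _)
  | succ n ih =>
    have step : (w n)⁺ + w (n + 2) ≤ (w (n + 2))⁺ := by
      rcases le_or_gt (w n) 0 with hn | hn
      · simpa [posPart_of_nonpos hn] using le_posPart _
      · rw [posPart_of_nonneg hn.le]
        exact (hw n n.lt_add_one hn).trans (posPart_nonneg _)
    calc ∑ k ∈ Finset.range (n + 1 + 2), w k
        = ∑ k ∈ Finset.range (n + 2), w k + w (n + 2) := Finset.sum_range_succ _ _
      _ ≤ (w n)⁺ + (w (n + 1))⁺ + w (n + 2) := by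
          gcongr; exact ih fun k hk => hw k (hk.trans n.lt_add_one)
      _ ≤ (w (n + 1))⁺ + (w (n + 1 + 1))⁺ := by
          rw [add_right_comm, add_comm]; gcongr

theorem sum_range_le_of_ge_imp_eq_zero_add_two {s : ℕ → ℝ} {θ h : ℝ} {M : ℕ} (hM : 2 ≤ M)
    (hθ : 1 / 2 ≤ θ) (hθ' : θ ≤ 1) (hh : 0 ≤ h) (hs : ∀ k, s k ≤ h)
    (hgap : ∀ k < M - 2, θ * h ≤ s k → s (k + 2) = 0) :
    ∑ k ∈ Finset.range M, s k ≤ θ * M * h + 2 * (1 - θ) * h := by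
  have hexcess : ∀ k, (s k - θ * h)⁺ ≤ (1 - θ) * h := fun k => by
    rw [posPart_def]; exact sup_le (by linarith [hs k]) (by nlinarith)
  have hcancel : ∀ k < M - 2, 0 < s k - θ * h → s k - θ * h + (s (k + 2) - θ * h) ≤ 0 :=
    fun k hk hpos => by nlinarith [hgap k hk (by linarith), hs k]
  have key := sum_range_add_two_le_posPart_add_posPart hcancel
  rw [Nat.sub_add_cancel hM, Finset.sum_sub_distrib, Finset.sum_const, Finset.card_range,
    nsmul_eq_mul] at key
  linarith [hexcess (M - 2), hexcess (M - 2 + 1)]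

theorem measure_inter_Icc_le_sum {α : Type*} [LinearOrder α] [MeasurableSpace α]
    {μ : Measure α} [NullSingletonClass μ] (E : Set α) (x : ℕ → α) (N : ℕ) :
    μ (E ∩ Icc (x 0) (x N)) ≤ ∑ k ∈ Finset.range N, μ (E ∩ Icc (x k) (x (k + 1))) := by
  calc μ (E ∩ Icc (x 0) (x N)) = μ (E ∩ Ioc (x 0) (x N)) :=
        measure_congr (Filter.EventuallyEq.rfl.inter Ioc_ae_eq_Icc.symm)
    _ ≤ μ (⋃ k ∈ Finset.range N, E ∩ Icc (x k) (x (k + 1))) := by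
        refine measure_mono fun y ⟨hyE, hy⟩ => ?_
        obtain ⟨k, hk, hyk⟩ := mem_iUnion₂.mp (Ioc_subset_biUnion_Ioc N x hy)
        exact mem_iUnion₂.mpr ⟨k, hk, hyE, Ioc_subset_Icc_self hyk⟩
    _ ≤ _ := measure_biUnion_finset_le _ _

/-- For `h = (b - a) / M`, `cell a h k` is the paper's `I_{k+1}`. -/
def cell (a h : ℝ) (k : ℕ) : Set ℝ := Icc (a + k * h) (a + (k + 1) * h)

theorem Icc_eq_cell {a L c d : ℝ} {M : ℕ} (i : ℕ) (hc : c = i) (hd : d = i + 1) :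
    Icc (a + c * L / M) (a + d * L / M) = cell a (L / M) i := by
  subst hc hd
  rw [cell, mul_div_assoc, mul_div_assoc]

theorem volume_cell (a h : ℝ) (k : ℕ) :
    volume (cell a h k) = ENNReal.ofReal h := by
  rw [cell, Real.volume_Icc]; ring_nf

theorem toReal_volume_inter_cell_le (E : Set ℝ) (a : ℝ) {h : ℝ} (hh : 0 ≤ h) (k : ℕ) :
    (volume (E ∩ cell a h k)).toReal ≤ h :=
  ENNReal.toReal_le_of_le_ofReal hh
    ((measure_mono inter_subset_right).trans (volume_cell a h k).le)

theorem toReal_volume_inter_Icc_le_sum_cell (E : Set ℝ) (a h : ℝ) (M : ℕ) :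
    (volume (E ∩ Icc a (a + M * h))).toReal ≤
      ∑ k ∈ Finset.range M, (volume (E ∩ cell a h k)).toReal := by
  have hfin : ∀ k, volume (E ∩ cell a h k) ≠ ⊤ := fun k =>
    measure_ne_top_of_subset inter_subset_right (by simp [volume_cell])
  have hcover := measure_inter_Icc_le_sum (μ := volume) E (fun k : ℕ => a + k * h) M
  simp only [Nat.cast_zero, zero_mul, add_zero, Nat.cast_add_one] at hcover
  rw [← ENNReal.toReal_sum fun k _ => hfin k]
  exact ENNReal.toReal_mono (ENNReal.sum_ne_top.mpr fun k _ => hfin k) hcover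

theorem stmt10_general (t ε : ℝ) (ht : t ∈ Set.Ioo (1/2 : ℝ) 1)
    (hε : 0 < ε ∧ ε < t - 1/2)
    (M : ℕ) (hM : (2 : ℝ) / ε < M)
    (a b : ℝ) (hab : a < b)
    (E : Set ℝ)
    (hdens : t * (volume (Set.Icc a b)).toReal ≤ (volume (E ∩ Set.Icc a b)).toReal) :
    ∃ j : ℕ, 1 ≤ j ∧ j ≤ M - 2 ∧
      t - ε ≤ (volume (E ∩ Set.Icc (a + (j - 1 : ℝ) * (b - a) / M) (a + (j : ℝ) * (b - a) / M))).toReal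
          / (volume (Set.Icc (a + (j - 1 : ℝ) * (b - a) / M) (a + (j : ℝ) * (b - a) / M))).toReal ∧
      0 < volume (E ∩ Set.Icc (a + (j + 1 : ℝ) * (b - a) / M) (a + (j + 2 : ℝ) * (b - a) / M)) := by
  obtain ⟨ht1, ht2⟩ := ht
  obtain ⟨hε0, hε1⟩ := hε
  have hεM : 2 < ε * M := by rwa [div_lt_iff₀' hε0] at hM
  have hM0 : (0 : ℝ) < M := pos_of_mul_pos_right (by linarith) hε0.le
  have hM2 : 2 ≤ M := by exact_mod_cast (show (2 : ℝ) ≤ M by nlinarith)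
  set h := (b - a) / M with h_def
  have hh : 0 < h := div_pos (by linarith) hM0
  have hb : b = a + M * h := by rw [h_def]; field_simp; ring
  set s : ℕ → ℝ := fun k => (volume (E ∩ cell a h k)).toReal
  have hdense : t * (M * h) ≤ ∑ k ∈ Finset.range M, s k :=
    calc t * (M * h) = t * (volume (Icc a b)).toReal := by
          rw [Real.volume_Icc, ENNReal.toReal_ofReal (by linarith), hb, add_sub_cancel_left]
      _ ≤ (volume (E ∩ Icc a b)).toReal := hdens
      _ ≤ _ := hb ▸ toReal_volume_inter_Icc_le_sum_cell E a h M
  by_contra! hcon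
  have hgap : ∀ k < M - 2, (t - ε) * h ≤ s k → s (k + 2) = 0 := by
    intro k hk hk_dense
    have hnull := hcon (k + 1) (by omega) (by omega) (by
      rwa [Icc_eq_cell k (by push_cast; ring) (by push_cast; ring), volume_cell,
        ENNReal.toReal_ofReal hh.le, le_div_iff₀ hh])
    rw [Icc_eq_cell (k + 2) (by push_cast; ring) (by push_cast; ring), nonpos_iff_eq_zero] at hnull
    exact (congrArg ENNReal.toReal hnull).trans ENNReal.toReal_zero
  have hsum := sum_range_le_of_ge_imp_eq_zero_add_two hM2 (by linarith) (by linarith) hh.le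
    (toReal_volume_inter_cell_le E a hh.le) hgap
  nlinarith

theorem stmt10 (t ε : ℝ) (ht : t ∈ Set.Ioo (1/2 : ℝ) 1)
    (hε : 0 < ε ∧ ε < t - 1/2)
    (M : ℕ) (hMeven : Even M) (hM : (2 : ℝ) / ε < M)
    (a b : ℝ) (hab : a < b)
    (E : Set ℝ) (hE : MeasurableSet E)
    (hdens : t * (volume (Set.Icc a b)).toReal ≤ (volume (E ∩ Set.Icc a b)).toReal) :
    ∃ j : ℕ, 1 ≤ j ∧ j ≤ M - 2 ∧
      t - ε ≤ (volume (E ∩ Set.Icc (a + (j - 1 : ℝ) * (b - a) / M) (a + (j : ℝ) * (b - a) / M))).toReal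
          / (volume (Set.Icc (a + (j - 1 : ℝ) * (b - a) / M) (a + (j : ℝ) * (b - a) / M))).toReal ∧
      0 < volume (E ∩ Set.Icc (a + (j + 1 : ℝ) * (b - a) / M) (a + (j + 2 : ℝ) * (b - a) / M)) :=
  stmt10_general t ε ht hε M hM a b hab E hdens
end

section
/- Let (a_n)_{n≥1} be a sequence of positive reals with δ := a₁ + Σ_{n=1}^∞ a_{n+1}/a_n ≤ 1/4. Define M₁ = 2⌈1/(2a₁)⌉ and M_{n+1} = 2⌈1/(2 M₁⋯M_n a_{n+1})⌉ for n ≥ 1. Then a_n/2 ≤ 1/(M₁⋯M_n) ≤ a_n for all n ≥ 1. -/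
/-!
Write `P` for the product `M₁ ⋯ Mₙ` (empty product `1`) and `x = aₙ₊₁`. Since `y = 1 / (2 P x)`
is at least `1/2`, its ceiling lies in `[y, 2y]`, so `1 / (P Mₙ₊₁) = 1 / (2 P ⌈y⌉)` lies in
`[x/2, x]`. The condition `P x ≤ 1` propagates: the lower bound `aₙ/2 ≤ 1/P` and the ratio bound
`aₙ₊₁ ≤ aₙ/4` give `P aₙ₊₁ ≤ 1/2`.
-/

theorem div_two_le_one_div_mul_two_ceil_and_le {P x : ℝ} (hP : 0 < P) (hx : 0 < x)
    (hPx : P * x ≤ 1) :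
    x / 2 ≤ 1 / (P * ((2 * ⌈1 / (2 * P * x)⌉₊ : ℕ) : ℝ)) ∧
      1 / (P * ((2 * ⌈1 / (2 * P * x)⌉₊ : ℕ) : ℝ)) ≤ x := by
  set y := 1 / (2 * P * x) with hy
  have hyx : 2 * P * x * y = 1 := by rw [hy]; field_simp
  have hy_half : 2⁻¹ ≤ y := by
    rw [hy, one_div, inv_le_inv₀ (by norm_num) (by positivity)]
    linarith
  have hceil_ge : y ≤ ⌈y⌉₊ := Nat.le_ceil y
  have hceil_le : (⌈y⌉₊ : ℝ) ≤ 2 * y := Nat.ceil_le_two_mul hy_half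
  have hceil_pos : (0 : ℝ) < ⌈y⌉₊ := by linarith
  push_cast
  constructor
  · rw [div_le_div_iff₀ (by norm_num) (by positivity)]
    nlinarith [mul_le_mul_of_nonneg_left hceil_le (by positivity : (0 : ℝ) ≤ P * x)]
  · rw [div_le_iff₀ (by positivity)]
    nlinarith [mul_le_mul_of_nonneg_left hceil_ge (by positivity : (0 : ℝ) ≤ P * x)]

theorem stmt11 (a : ℕ → ℝ) (hpos : ∀ n ≥ 1, 0 < a n)
    (hsum : Summable (fun n : ℕ => a (n + 2) / a (n + 1)))
    (hδ : a 1 + ∑' n : ℕ, a (n + 2) / a (n + 1) ≤ 1/4)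
    (M : ℕ → ℕ)
    (hM1 : M 1 = 2 * ⌈1 / (2 * a 1)⌉₊)
    (hMrec : ∀ n ≥ 1, M (n + 1) =
      2 * ⌈1 / (2 * (∏ i ∈ Finset.Icc 1 n, (M i : ℝ)) * a (n + 1))⌉₊) :
    ∀ n ≥ 1, a n / 2 ≤ 1 / (∏ i ∈ Finset.Icc 1 n, (M i : ℝ)) ∧
      1 / (∏ i ∈ Finset.Icc 1 n, (M i : ℝ)) ≤ a n := by
  have hratio_nonneg : ∀ n, 0 ≤ a (n + 2) / a (n + 1) := fun n =>
    (div_pos (hpos _ (by omega)) (hpos _ (by omega))).le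
  have htsum_nonneg : 0 ≤ ∑' n : ℕ, a (n + 2) / a (n + 1) := tsum_nonneg hratio_nonneg
  have hratio : ∀ n ≥ 1, a (n + 1) ≤ a n / 4 := by
    intro n hn
    obtain ⟨k, rfl⟩ : ∃ k, n = k + 1 := ⟨n - 1, by omega⟩
    have hk : a (k + 2) / a (k + 1) ≤ 1 / 4 := by
      linarith [hsum.le_tsum k fun j _ => hratio_nonneg j, hpos 1 le_rfl]
    rw [div_le_iff₀ (hpos _ (by omega))] at hk
    linarith
  intro n hn
  induction n, hn using Nat.le_induction with
  | base =>
    simpa [hM1] using div_two_le_one_div_mul_two_ceil_and_le one_pos (hpos 1 le_rfl)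
      (by linarith)
  | succ n hn ih =>
    set P := ∏ i ∈ Finset.Icc 1 n, (M i : ℝ)
    have hP : 0 < P := one_div_pos.mp ((half_pos (hpos n hn)).trans_le ih.1)
    have hPa : a n / 2 * P ≤ 1 := (le_div_iff₀ hP).mp ih.1
    have hPx : P * a (n + 1) ≤ 1 := by
      nlinarith [mul_le_mul_of_nonneg_left (hratio n hn) hP.le]
    rw [Finset.prod_Icc_succ_top (by omega), hMrec n hn]
    exact div_two_le_one_div_mul_two_ceil_and_le hP (hpos _ (by omega)) hPx
end

section
/- Let (a_n)_{n≥1} be a sequence of positive reals with δ := a₁ + Σ_{n=1}^∞ a_{n+1}/a_n ≤ 1/4. Define M₁ = 2⌈1/(2a₁)⌉ and M_{n+1} = 2⌈1/(2 M₁⋯M_n a_{n+1})⌉ for n ≥ 1. Then Σ_{n=1}^∞ 1/M_n < 2δ. -/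
/-!
Write `b n = scaledTerm a M n = M₁⋯Mₙ a_{n+1}`, so that `M_{n+1} = 2⌈1/(2 b n)⌉` is the least
even integer `≥ 1 / b n`. Hence `1 / M_{n+1} ≤ b n`, and `b (n+1) = M_{n+1} b n (a_{n+2}/a_{n+1})`
with `M_{n+1} b n ≤ 1 + 2 b n ≤ 2` as long as `b n ≤ 1/2`. Since every ratio is at most `1/4`,
this bound propagates, and summing gives `∑ 1/M_n ≤ a₁ + 2 ∑ a_{n+1}/a_n < 2δ`.
-/

open Finset

lemma one_div_le_two_mul_ceil {x : ℝ} (hx : 0 < x) :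
    1 / x ≤ 2 * (⌈1 / (2 * x)⌉₊ : ℝ) :=
  calc 1 / x = 2 * (1 / (2 * x)) := by field_simp
    _ ≤ 2 * (⌈1 / (2 * x)⌉₊ : ℝ) := by gcongr; exact Nat.le_ceil _

lemma two_mul_ceil_mul_le {x : ℝ} (hx : 0 ≤ x) :
    2 * (⌈1 / (2 * x)⌉₊ : ℝ) * x ≤ 1 + 2 * x := by
  rcases hx.eq_or_lt with rfl | hx
  · simp
  calc 2 * (⌈1 / (2 * x)⌉₊ : ℝ) * x ≤ 2 * (1 / (2 * x) + 1) * x := by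
        gcongr; exact (Nat.ceil_lt_add_one (by positivity)).le
    _ = 1 + 2 * x := by field_simp

lemma tsum_le_add_tsum_of_succ_le {f g : ℕ → ℝ} {x : ℝ} (hf : ∀ n, 0 ≤ f n)
    (hg : Summable g) (h0 : f 0 ≤ x) (hsucc : ∀ n, f (n + 1) ≤ g n) :
    ∑' n, f n ≤ x + ∑' n, g n := by
  have hf' : Summable (fun n => f (n + 1)) := Summable.of_nonneg_of_le (fun n => hf _) hsucc hg
  rw [((summable_nat_add_iff 1).mp hf').tsum_eq_zero_add]
  exact add_le_add h0 (hf'.tsum_le_tsum hsucc hg)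

section GreedyDenominators

variable (a : ℕ → ℝ) (M : ℕ → ℕ)

def scaledTerm (n : ℕ) : ℝ := (∏ i ∈ Icc 1 n, (M i : ℝ)) * a (n + 1)

lemma scaledTerm_zero : scaledTerm a M 0 = a 1 := by simp [scaledTerm]

variable {a M}

lemma scaledTerm_succ {n : ℕ} (ha : a (n + 1) ≠ 0) :
    scaledTerm a M (n + 1) = M (n + 1) * scaledTerm a M n * (a (n + 2) / a (n + 1)) := by
  simp only [scaledTerm, prod_Icc_succ_top (Nat.le_add_left 1 n)]
  field_simp

lemma M_succ_eq (hM1 : M 1 = 2 * ⌈1 / (2 * a 1)⌉₊)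
    (hMrec : ∀ n ≥ 1, M (n + 1) =
      2 * ⌈1 / (2 * (∏ i ∈ Icc 1 n, (M i : ℝ)) * a (n + 1))⌉₊) (n : ℕ) :
    M (n + 1) = 2 * ⌈1 / (2 * scaledTerm a M n)⌉₊ := by
  cases n with
  | zero => rwa [scaledTerm_zero]
  | succ n => rw [hMrec _ (Nat.le_add_left 1 n), scaledTerm, mul_assoc]

lemma one_div_M_succ_le (hM : ∀ n, M (n + 1) = 2 * ⌈1 / (2 * scaledTerm a M n)⌉₊) {n : ℕ}
    (hb : 0 < scaledTerm a M n) : 1 / (M (n + 1) : ℝ) ≤ scaledTerm a M n := by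
  have h := one_div_le_two_mul_ceil hb
  rw [show (2 : ℝ) * ⌈1 / (2 * scaledTerm a M n)⌉₊ = M (n + 1) by rw [hM]; push_cast; rfl] at h
  exact (one_div_le ((one_div_pos.mpr hb).trans_le h) hb).mpr h

lemma scaledTerm_pos (ha : ∀ n, 0 < a (n + 1))
    (hM : ∀ n, M (n + 1) = 2 * ⌈1 / (2 * scaledTerm a M n)⌉₊) (n : ℕ) :
    0 < scaledTerm a M n := by
  induction n with
  | zero => simpa [scaledTerm_zero] using ha 0
  | succ n ih =>
    have hMpos : 0 < M (n + 1) := by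
      rw [hM]; exact Nat.mul_pos two_pos (Nat.ceil_pos.mpr (by positivity))
    rw [scaledTerm_succ (ha n).ne']
    have := div_pos (ha (n + 1)) (ha n)
    positivity

lemma scaledTerm_succ_le (ha : ∀ n, 0 < a (n + 1))
    (hM : ∀ n, M (n + 1) = 2 * ⌈1 / (2 * scaledTerm a M n)⌉₊) {n : ℕ}
    (hb : scaledTerm a M n ≤ 1 / 2) :
    scaledTerm a M (n + 1) ≤ 2 * (a (n + 2) / a (n + 1)) := by
  have hMb : (M (n + 1) : ℝ) * scaledTerm a M n ≤ 2 := by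
    have := two_mul_ceil_mul_le (scaledTerm_pos ha hM n).le
    rw [hM]; push_cast; linarith
  rw [scaledTerm_succ (ha n).ne']
  exact mul_le_mul_of_nonneg_right hMb (div_pos (ha (n + 1)) (ha n)).le

lemma scaledTerm_le_half (ha : ∀ n, 0 < a (n + 1))
    (hM : ∀ n, M (n + 1) = 2 * ⌈1 / (2 * scaledTerm a M n)⌉₊) (ha1 : a 1 ≤ 1 / 2)
    (hr : ∀ n, a (n + 2) / a (n + 1) ≤ 1 / 4) (n : ℕ) :
    scaledTerm a M n ≤ 1 / 2 := by
  induction n with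
  | zero => rwa [scaledTerm_zero]
  | succ n ih => linarith [scaledTerm_succ_le ha hM ih, hr n]

end GreedyDenominators

theorem stmt12 (a : ℕ → ℝ) (hpos : ∀ n ≥ 1, 0 < a n)
    (hsum : Summable (fun n : ℕ => a (n + 2) / a (n + 1)))
    (hδ : a 1 + ∑' n : ℕ, a (n + 2) / a (n + 1) ≤ 1/4)
    (M : ℕ → ℕ)
    (hM1 : M 1 = 2 * ⌈1 / (2 * a 1)⌉₊)
    (hMrec : ∀ n ≥ 1, M (n + 1) =
      2 * ⌈1 / (2 * (∏ i ∈ Finset.Icc 1 n, (M i : ℝ)) * a (n + 1))⌉₊) :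
    ∑' n : ℕ, 1 / (M (n + 1) : ℝ) < 2 * (a 1 + ∑' n : ℕ, a (n + 2) / a (n + 1)) := by
  have ha : ∀ n, 0 < a (n + 1) := fun n => hpos _ n.succ_pos
  have hr0 : ∀ n, 0 ≤ a (n + 2) / a (n + 1) := fun n => (div_pos (ha _) (ha _)).le
  have hr : ∀ n, a (n + 2) / a (n + 1) ≤ 1 / 4 := fun n =>
    (hsum.le_tsum n fun m _ => hr0 m).trans (by linarith [ha 0])
  have hM := M_succ_eq hM1 hMrec
  have hb := scaledTerm_le_half ha hM (by linarith [tsum_nonneg (L := .unconditional ℕ) hr0]) hr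
  have key : ∑' n, 1 / (M (n + 1) : ℝ) ≤ a 1 + ∑' n, 2 * (a (n + 2) / a (n + 1)) :=
    tsum_le_add_tsum_of_succ_le (fun n => by positivity) (hsum.mul_left 2)
      (scaledTerm_zero a M ▸ one_div_M_succ_le hM (scaledTerm_pos ha hM 0))
      fun n => (one_div_M_succ_le hM (scaledTerm_pos ha hM _)).trans
        (scaledTerm_succ_le ha hM (hb n))
  rw [tsum_mul_left] at key
  linarith [ha 0]
end

section
/- Let (a_n)_{n≥1} be a sequence of positive reals with δ := a₁ + Σ_{n=1}^∞ a_{n+1}/a_n < 1/8. Then for any Lebesgue measurable set E ⊆ [0,1] with L(E) > 1/2 + 4δ, there exists a map f : ℝ → ℝ such that f(a_n) ∈ E for all n ≥ 1 and (1/2)|x-y| ≤ |f(x)-f(y)| ≤ (3/(1-δ))|x-y| for all x, y ∈ ℝ. -/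
/-!
Put `b n = a (n + 1)`; the hypotheses give `3 b (n + 1) ≤ b n` and `2 (1 - L(E)) < 1 - 2 b 0`.

First find `t` such that every interval `[t + b n, t + 2 b n]` meets `E`. With `F = [0, 1] \ E` and
`C n = {x | [x, x + b n] ⊆ F}`, an increasing family, every bad `t ∈ [0, 1 - 2 b 0]` satisfies
`t + b n ∈ C n` for some `n`. Shifting by `b n - b (n + 1)` maps `C n` into `C (n + 1)`, so the
bad set is covered by translates of the disjoint pieces `C 0, C 1 \ C 0, …`, each used at most
twice; hence it has measure at most `2 L(F) = 2 (1 - L(E))`, less than that of `[0, 1 - 2 b 0]`.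

Then pick `e n ∈ E ∩ [t + b n, t + 2 b n]` and let `f` be the piecewise-linear interpolation of the
points `(b n, e n)`, which accumulate at `(0, t)`. Since `3 b (n + 1) ≤ b n`, all its slopes lie
in `[1/2, 3]`, so `f - x/2` and `3x - f` are monotone, and `3 ≤ 3 / (1 - δ)`.
-/

open MeasureTheory Set Filter Topology

theorem measure_iUnion_preimage_add_le {G : Type*} [AddGroup G] [MeasurableSpace G]
    [MeasurableAdd G] (μ : Measure G) [μ.IsAddRightInvariant] {C : ℕ → Set G} {b : ℕ → G}
    (hC : ∀ n, MeasurableSet (C n)) (hmono : Monotone C)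
    (hshift : ∀ n x, x ∈ C n → x - b (n + 1) + b n ∈ C (n + 1)) :
    μ (⋃ n, (· + b n) ⁻¹' C n) ≤ 2 * μ (⋃ n, C n) := by
  set D := disjointed C
  -- If `x + b (n+1)` lies in `C (n+1)` but `x + b n` does not lie in `C n`, then either
  -- `x + b (n+1)` or (by the shift) `x + b n` lies in the new part `D (n+1)`.
  have hcover : ⋃ n, (· + b n) ⁻¹' C n ⊆ ⋃ n, ((· + b n) ⁻¹' D n ∪ (· + b n) ⁻¹' D (n + 1)) := by
    refine iUnion_subset fun N x hx => ?_
    induction N with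
    | zero => exact mem_iUnion.2 ⟨0, Or.inl (by simpa [D, disjointed_zero] using hx)⟩
    | succ N ih =>
      by_cases hN : x + b N ∈ C N
      · exact ih hN
      have hD : D (N + 1) = C (N + 1) \ C N := hmono.disjointed_add_one N
      by_cases hN' : x + b (N + 1) ∈ C N
      · have := hshift N _ hN'
        rw [add_sub_cancel_right] at this
        exact mem_iUnion.2 ⟨N, Or.inr (by simp only [mem_preimage, hD]; exact ⟨this, hN⟩)⟩
      · exact mem_iUnion.2 ⟨N + 1, Or.inl (by simp only [mem_preimage, hD]; exact ⟨hx, hN'⟩)⟩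
  have hsum : ∑' n, μ (D n) = μ (⋃ n, C n) := by
    rw [← measure_iUnion (disjoint_disjointed C) (MeasurableSet.disjointed hC), iUnion_disjointed]
  calc μ (⋃ n, (· + b n) ⁻¹' C n)
      ≤ ∑' n, (μ (D n) + μ (D (n + 1))) := by
        refine (measure_mono hcover).trans ((measure_iUnion_le _).trans
          (ENNReal.tsum_le_tsum fun n => (measure_union_le _ _).trans ?_))
        rw [measure_preimage_add_right, measure_preimage_add_right]
    _ ≤ ∑' n, μ (D n) + ∑' n, μ (D n) := by
        rw [ENNReal.tsum_add]
        exact add_le_add le_rfl (ENNReal.tsum_comp_le_tsum_of_injective (add_left_injective 1) _)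
    _ = 2 * μ (⋃ n, C n) := by rw [hsum, two_mul]

theorem measurableSet_setOf_Icc_subset {F : Set ℝ} (hF : MeasurableSet F) {r : ℝ} (hr : 0 ≤ r) :
    MeasurableSet {x | Icc x (x + r) ⊆ F} := by
  have hopen : IsOpen {x | Ioo x (x + r) ⊆ F}ᶜ := by
    convert isOpen_biUnion (s := Fᶜ) fun z _ => isOpen_Ioo (a := z - r) (b := z) using 1
    ext x
    simp only [mem_compl_iff, mem_ofPred_eq, subset_def, not_forall, mem_Ioo, mem_iUnion]
    constructor
    · rintro ⟨z, hz, hzF⟩; exact ⟨z, hzF, by linarith, hz.1⟩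
    · rintro ⟨z, hzF, h1, h2⟩; exact ⟨z, ⟨h2, by linarith⟩, hzF⟩
  have hsplit : {x | Icc x (x + r) ⊆ F} = F ∩ (· + r) ⁻¹' F ∩ {x | Ioo x (x + r) ⊆ F} := by
    ext x
    simp only [mem_ofPred_eq, mem_inter_iff, mem_preimage]
    refine ⟨fun h => ⟨⟨h ⟨le_rfl, by linarith⟩, h ⟨by linarith, le_rfl⟩⟩,
      Ioo_subset_Icc_self.trans h⟩,
      fun ⟨⟨hx, hxr⟩, ho⟩ z hz => ?_⟩
    rcases hz.1.eq_or_lt with rfl | h1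
    · exact hx
    rcases hz.2.eq_or_lt with rfl | h2
    · exact hxr
    exact ho ⟨h1, h2⟩
  rw [hsplit]
  exact (hF.inter (hF.preimage (measurable_add_const r))).inter
    (isOpen_compl_iff.1 hopen).measurableSet

theorem exists_forall_inter_Icc_nonempty {E : Set ℝ} (hE : MeasurableSet E) (hE1 : E ⊆ Icc 0 1)
    {b : ℕ → ℝ} (hb : Antitone b) (hb0 : ∀ n, 0 ≤ b n)
    (hgap : 2 * (1 - volume.real E) < 1 - 2 * b 0) :
    ∃ t, ∀ n, (E ∩ Icc (t + b n) (t + 2 * b n)).Nonempty := by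
  by_contra! hbad
  set F := Icc 0 1 \ E
  set C : ℕ → Set ℝ := fun n => {x | Icc x (x + b n) ⊆ F}
  have hCF : ⋃ n, C n ⊆ F :=
    iUnion_subset fun n x hx => hx ⟨le_rfl, le_add_of_nonneg_right (hb0 n)⟩
  have hcover : Icc 0 (1 - 2 * b 0) ⊆ ⋃ n, (· + b n) ⁻¹' C n := by
    intro x hx
    obtain ⟨n, hn⟩ := hbad x
    refine mem_iUnion.2 ⟨n, fun z hz => ⟨⟨?_, ?_⟩, fun hzE => hn.subset ⟨hzE, hz.1, ?_⟩⟩⟩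
    · linarith [hx.1, hz.1, hb0 n]
    · linarith [hx.2, hz.2, hb (Nat.zero_le n)]
    · linarith [hz.2]
  have hle : volume (Icc (0 : ℝ) (1 - 2 * b 0)) ≤ 2 * volume F := by
    refine (measure_mono hcover).trans <| (measure_iUnion_preimage_add_le volume
      (fun n => measurableSet_setOf_Icc_subset (measurableSet_Icc.diff hE) (hb0 n))
      (fun m n hmn x hx => (Icc_subset_Icc le_rfl (by linarith [hb hmn])).trans hx)
      (fun n x hx => (Icc_subset_Icc (by linarith [hb n.le_succ]) (by linarith)).trans hx)).trans ?_
    gcongr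
  have hF : volume.real F = 1 - volume.real E := by
    rw [measureReal_sdiff hE1 hE measure_Icc_lt_top.ne, Real.volume_real_Icc]; norm_num
  have hFfin : volume F ≠ ⊤ := ((measure_mono sdiff_subset).trans_lt measure_Icc_lt_top).ne
  rw [Real.volume_Icc, ENNReal.ofReal_le_iff_le_toReal (ENNReal.mul_ne_top (by simp) hFfin),
    ENNReal.toReal_mul, ← measureReal_def, hF] at hle
  norm_num at hle
  linarith

theorem monotone_of_monotoneOn_Icc {g : ℝ → ℝ} {b : ℕ → ℝ} (hb : Antitone b)
    (hlim : Tendsto b atTop (𝓝 0)) (hg : Tendsto (fun k => g (b k)) atTop (𝓝 (g 0)))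
    (hneg : MonotoneOn g (Iic 0)) (hpiece : ∀ k, MonotoneOn g (Icc (b (k + 1)) (b k)))
    (htop : MonotoneOn g (Ici (b 0))) : Monotone g := by
  have hIci : ∀ k, MonotoneOn g (Ici (b k)) := by
    intro k
    induction k with
    | zero => exact htop
    | succ k ih =>
      rw [← Icc_union_Ici_eq_Ici (hb k.le_succ)]
      exact (hpiece k).union_right ih (isGreatest_Icc (hb k.le_succ)) isLeast_Ici
  have hpos : ∀ x y, 0 < x → x ≤ y → g x ≤ g y := fun x y hx hxy =>
    let ⟨k, hk⟩ := (hlim.eventually (gt_mem_nhds hx)).exists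
    hIci k hk.le (hk.le.trans hxy) hxy
  have hzero : ∀ y, 0 < y → g 0 ≤ g y := fun y hy =>
    le_of_tendsto hg ((hlim.eventually (gt_mem_nhds hy)).mono fun k hk =>
      hIci k self_mem_Ici hk.le hk.le)
  intro x y hxy
  rcases le_or_gt y 0 with hy | hy
  · exact hneg (hxy.trans hy) hy hxy
  rcases le_or_gt x 0 with hx | hx
  · exact (hneg hx self_mem_Iic hx).trans (hzero y hy)
  · exact hpos x y hx hxy

theorem monotoneOn_of_eqOn_affine {f : ℝ → ℝ} {s : Set ℝ} {c x₀ σ m M : ℝ}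
    (hf : EqOn f (fun x => c + (x - x₀) * σ) s) (hσ : σ ∈ Icc m M) :
    MonotoneOn (fun x => f x - m * x) s ∧ MonotoneOn (fun x => M * x - f x) s := by
  refine ⟨fun x hx y hy hxy => ?_, fun x hx y hy hxy => ?_⟩ <;>
  · simp only [hf hx, hf hy]
    nlinarith [hσ.1, hσ.2]

noncomputable def interpSlope (b e : ℕ → ℝ) (t : ℝ) : ℕ → ℝ
  | 0 => (e 0 - t) / b 0
  | k + 1 => (e k - e (k + 1)) / (b k - b (k + 1))

/-- For knots `b k` decreasing to `0`, `k` is the index of the piece `Ioc (b k) (b (k - 1))`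
containing `x > 0`. For `x ≤ 0` the index set is empty and `sInf ∅ = 0`, so the function
continues the outer line through `(0, t)` and `(b 0, e 0)`. -/
noncomputable def interpKnots (b e : ℕ → ℝ) (t x : ℝ) : ℝ :=
  let k := sInf {k | b k < x}
  e k + (x - b k) * interpSlope b e t k

section interpKnots

variable {b e : ℕ → ℝ} {t : ℝ}

theorem sInf_setOf_lt_eq_succ (hb : StrictAnti b) {k : ℕ} {x : ℝ} (h₁ : b (k + 1) < x)
    (h₂ : x ≤ b k) : sInf {j | b j < x} = k + 1 := by
  refine le_antisymm (Nat.sInf_le h₁) (le_csInf ⟨_, h₁⟩ fun j hj => ?_)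
  by_contra! hjk
  exact (hj.trans_le h₂).not_ge (hb.antitone (Nat.lt_succ_iff.1 hjk))

theorem interpKnots_apply_knot (hb : StrictAnti b) (k : ℕ) : interpKnots b e t (b k) = e k := by
  have hk := sub_pos.2 (hb k.lt_succ_self)
  rw [interpKnots, sInf_setOf_lt_eq_succ hb (hb k.lt_succ_self) le_rfl, interpSlope]
  field_simp
  ring

theorem eqOn_interpKnots_Icc (hb : StrictAnti b) (k : ℕ) :
    EqOn (interpKnots b e t) (fun x => e (k + 1) + (x - b (k + 1)) * interpSlope b e t (k + 1))
      (Icc (b (k + 1)) (b k)) := by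
  intro x hx
  rcases hx.1.eq_or_lt with rfl | h
  · simp [interpKnots_apply_knot hb]
  · rw [interpKnots, sInf_setOf_lt_eq_succ hb h hx.2]

theorem eqOn_interpKnots_outer (hb : StrictAnti b) (hb0 : ∀ k, 0 < b k) :
    EqOn (interpKnots b e t) (fun x => e 0 + (x - b 0) * interpSlope b e t 0)
      (Iic 0 ∪ Ici (b 0)) := by
  rintro x (hx | hx)
  · have : {k | b k < x} = ∅ :=
      eq_empty_of_forall_notMem fun k hk => (hb0 k).not_ge (hk.le.trans hx)
    simp only [interpKnots, this, Nat.sInf_empty]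
  rcases (mem_Ici.1 hx).eq_or_lt with rfl | h
  · simp [interpKnots_apply_knot hb]
  · have : sInf {k | b k < x} = 0 := Nat.sInf_eq_zero.2 (Or.inl h)
    simp only [interpKnots, this]

theorem interpKnots_zero (hb : StrictAnti b) (hb0 : ∀ k, 0 < b k) : interpKnots b e t 0 = t := by
  rw [eqOn_interpKnots_outer hb hb0 (Or.inl self_mem_Iic), interpSlope]
  field_simp [(hb0 0).ne']
  ring

theorem monotone_interpKnots (hb : StrictAnti b) (hb0 : ∀ k, 0 < b k)
    (hbt : Tendsto b atTop (𝓝 0)) (het : Tendsto e atTop (𝓝 t)) {m M : ℝ}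
    (hslope : ∀ k, interpSlope b e t k ∈ Icc m M) :
    Monotone (fun x => interpKnots b e t x - m * x) ∧
      Monotone (fun x => M * x - interpKnots b e t x) := by
  have hout := monotoneOn_of_eqOn_affine (eqOn_interpKnots_outer hb hb0) (hslope 0)
  have hpiece := fun k => monotoneOn_of_eqOn_affine (eqOn_interpKnots_Icc hb k) (hslope (k + 1))
  have hlow : Tendsto (fun k => interpKnots b e t (b k) - m * b k) atTop
      (𝓝 (interpKnots b e t 0 - m * 0)) := by
    simpa only [interpKnots_apply_knot hb, interpKnots_zero hb hb0] using het.sub (hbt.const_mul m)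
  have hup : Tendsto (fun k => M * b k - interpKnots b e t (b k)) atTop
      (𝓝 (M * 0 - interpKnots b e t 0)) := by
    simpa only [interpKnots_apply_knot hb, interpKnots_zero hb hb0] using (hbt.const_mul M).sub het
  exact ⟨monotone_of_monotoneOn_Icc hb.antitone hbt hlow (hout.1.mono subset_union_left)
      (fun k => (hpiece k).1) (hout.1.mono subset_union_right),
    monotone_of_monotoneOn_Icc hb.antitone hbt hup (hout.2.mono subset_union_left)
      (fun k => (hpiece k).2) (hout.2.mono subset_union_right)⟩

end interpKnots

theorem abs_sub_bounds_of_monotone {f : ℝ → ℝ} {m M : ℝ} (hm : 0 ≤ m)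
    (hlow : Monotone fun x => f x - m * x) (hup : Monotone fun x => M * x - f x) (x y : ℝ) :
    m * |x - y| ≤ |f x - f y| ∧ |f x - f y| ≤ M * |x - y| := by
  wlog hxy : x ≤ y generalizing x y
  · rw [abs_sub_comm x, abs_sub_comm (f x)]
    exact this y x (le_of_not_ge hxy)
  have h₁ : f x - m * x ≤ f y - m * y := hlow hxy
  have h₂ : M * x - f x ≤ M * y - f y := hup hxy
  rw [abs_sub_comm, abs_of_nonneg (sub_nonneg.2 hxy), abs_sub_comm,
    abs_of_nonneg (by nlinarith)]
  constructor <;> linarith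

theorem exists_bilipschitz_of_mem_Icc {b e : ℕ → ℝ} {t : ℝ} (hb0 : ∀ k, 0 < b k)
    (hb3 : ∀ k, 3 * b (k + 1) ≤ b k) (hbt : Tendsto b atTop (𝓝 0))
    (he : ∀ k, e k ∈ Icc (t + b k) (t + 2 * b k)) :
    ∃ f : ℝ → ℝ, (∀ k, f (b k) = e k) ∧
      ∀ x y, 1 / 2 * |x - y| ≤ |f x - f y| ∧ |f x - f y| ≤ 3 * |x - y| := by
  have hb : StrictAnti b := strictAnti_nat_of_succ_lt fun k => by linarith [hb0 (k + 1), hb3 k]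
  have het : Tendsto e atTop (𝓝 t) := by
    refine tendsto_of_tendsto_of_tendsto_of_le_of_le (g := fun k => t + b k)
      (h := fun k => t + 2 * b k) ?_ ?_ (fun k => (he k).1) (fun k => (he k).2)
    · simpa using hbt.const_add t
    · simpa using (hbt.const_mul 2).const_add t
  have hslope : ∀ k, interpSlope b e t k ∈ Icc (1 / 2) 3 := by
    rintro (_ | k) <;> simp only [interpSlope, mem_Icc]
    · rw [le_div_iff₀ (hb0 0), div_le_iff₀ (hb0 0)]
      constructor <;> linarith [(he 0).1, (he 0).2, hb0 0]
    · have hk := sub_pos.2 (hb (Nat.lt_add_one k))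
      rw [le_div_iff₀ hk, div_le_iff₀ hk]
      constructor <;> linarith [(he k).1, (he k).2, (he (k + 1)).1, (he (k + 1)).2, hb3 k]
  obtain ⟨hlow, hup⟩ := monotone_interpKnots hb hb0 hbt het hslope
  exact ⟨interpKnots b e t, interpKnots_apply_knot hb,
    abs_sub_bounds_of_monotone (by norm_num) hlow hup⟩

theorem stmt13 (a : ℕ → ℝ) (hpos : ∀ n ≥ 1, 0 < a n)
    (hsum : Summable (fun n : ℕ => a (n + 2) / a (n + 1)))
    (δ : ℝ) (hδ : δ = a 1 + ∑' n : ℕ, a (n + 2) / a (n + 1)) (hδlt : δ < 1/8)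
    (E : Set ℝ) (hE : MeasurableSet E) (hE1 : E ⊆ Set.Icc (0:ℝ) 1)
    (hEpos : 1/2 + 4 * δ < (volume E).toReal) :
    ∃ f : ℝ → ℝ, (∀ n ≥ 1, f (a n) ∈ E) ∧
      ∀ x y : ℝ, (1/2) * |x - y| ≤ |f x - f y| ∧ |f x - f y| ≤ (3 / (1 - δ)) * |x - y| := by
  set b : ℕ → ℝ := fun n => a (n + 1)
  have hb0 : ∀ n, 0 < b n := fun n => hpos (n + 1) n.succ_pos
  have hratio_nonneg : ∀ n, 0 ≤ a (n + 2) / a (n + 1) := fun n => (div_pos (hb0 _) (hb0 _)).le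
  have htsum : 0 ≤ ∑' n : ℕ, a (n + 2) / a (n + 1) := tsum_nonneg hratio_nonneg
  have ha1 : 0 < a 1 := hpos 1 le_rfl
  have hb3 : ∀ n, 3 * b (n + 1) ≤ b n := fun n => by
    have h : a (n + 2) / a (n + 1) ≤ 1 / 3 :=
      (hsum.le_tsum n fun k _ => hratio_nonneg k).trans (by linarith)
    rw [div_le_iff₀ (hb0 n)] at h
    exact (show 3 * a (n + 2) ≤ a (n + 1) by linarith)
  have hbt : Tendsto b atTop (𝓝 0) :=
    (summable_of_ratio_norm_eventually_le (r := 1 / 3) (by norm_num) (Eventually.of_forall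
      fun n => by simp only [Real.norm_of_nonneg (hb0 _).le]; linarith [hb3 n])).tendsto_atTop_zero
  obtain ⟨t, ht⟩ := exists_forall_inter_Icc_nonempty hE hE1
    (antitone_nat_of_succ_le fun n => by linarith [hb3 n, hb0 (n + 1)]) (fun n => (hb0 n).le)
    (by change _ < 1 - 2 * a 1; rw [measureReal_def]; linarith)
  choose e heE he using ht
  obtain ⟨f, hfb, hf⟩ := exists_bilipschitz_of_mem_Icc hb0 hb3 hbt he
  refine ⟨f, fun n hn => ?_, fun x y => ⟨(hf x y).1, (hf x y).2.trans ?_⟩⟩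
  · obtain ⟨k, rfl⟩ := Nat.exists_eq_add_of_le' hn
    exact hfb k ▸ heE k
  · gcongr
    rw [le_div_iff₀ (by linarith)]
    linarith
end

section
/- Let (a_n)_{n≥1} be a sequence of positive reals with a₁ + Σ_{n=1}^∞ a_{n+1}/a_n < 1/8, and let A = {a_n : n ≥ 1}. Then the set F = ⋃_{n=1}^∞ 3^{-n}(1 + A) = {3^{-n}(1 + a_m) : n, m ≥ 1} is bi-Lipschitz measure universal: for every Lebesgue measurable E ⊆ ℝ of positive measure there exists a bi-Lipschitz map f : ℝ → ℝ with f(F) ⊆ E. -/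
/-!
By the Lebesgue density theorem there are a scale `R` and a point `t₀` at which the set of points
of `E` that are themselves almost full density points of `E` up to scale `R` has almost full density.
With `ρ = R / 2` one can therefore pick such points `tₙ` near `t₀ + ρ 3⁻ⁿ`, and then points
`yₙₘ ∈ E` near `tₙ + ρ 3⁻ⁿ aₘ`. The map `3⁻ⁿ (1 + aₘ) ↦ yₙₘ` differs from `x ↦ t₀ + ρ x` by a
`ρ / 2`-Lipschitz error: distinct clusters `3⁻ⁿ (1 + A)` are separated at scale `3⁻ⁿ`, and inside
a cluster the `aₘ` decay by a factor `8`. A McShane extension of the error gives the bi-Lipschitz map.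
-/

open MeasureTheory Metric Set Filter Topology

def IsBiLipschitz (f : ℝ → ℝ) : Prop :=
  ∃ L : ℝ, 1 < L ∧ ∀ x y : ℝ, L⁻¹ * |x - y| ≤ |f x - f y| ∧ |f x - f y| ≤ L * |x - y|

theorem isBiLipschitz_mul_add {ρ : ℝ} {K : NNReal} {g : ℝ → ℝ} (hg : LipschitzWith K g)
    (hK : (K : ℝ) < ρ) : IsBiLipschitz fun x => ρ * x + g x := by
  have hgap : 0 < ρ - K := sub_pos.2 hK
  have hρ : 0 < ρ := K.coe_nonneg.trans_lt hK
  refine ⟨1 + ρ + K + (ρ - K)⁻¹, by linarith [inv_pos.2 hgap, K.coe_nonneg], fun x y => ?_⟩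
  have hg' : |g x - g y| ≤ K * |x - y| := by simpa [Real.dist_eq] using hg.dist_le_mul x y
  have hρxy : |ρ * (x - y)| = ρ * |x - y| := by rw [abs_mul, abs_of_pos hρ]
  have hsplit : ρ * x + g x - (ρ * y + g y) = ρ * (x - y) + (g x - g y) := by ring
  rw [hsplit]
  constructor
  · calc (1 + ρ + K + (ρ - K)⁻¹)⁻¹ * |x - y| ≤ (ρ - K) * |x - y| :=
          mul_le_mul_of_nonneg_right
            (inv_le_of_inv_le₀ hgap (by linarith [K.coe_nonneg, hρ])) (abs_nonneg _)
      _ ≤ |ρ * (x - y) + (g x - g y)| := by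
          have := abs_sub_abs_le_abs_sub (ρ * (x - y)) (-(g x - g y))
          rw [abs_neg, sub_neg_eq_add] at this
          linarith
  · calc |ρ * (x - y) + (g x - g y)| ≤ ρ * |x - y| + K * |x - y| := by
          linarith [abs_add_le (ρ * (x - y)) (g x - g y)]
      _ = (ρ + K) * |x - y| := by ring
      _ ≤ (1 + ρ + K + (ρ - K)⁻¹) * |x - y| :=
          mul_le_mul_of_nonneg_right (by linarith [inv_pos.2 hgap]) (abs_nonneg _)

theorem exists_isBiLipschitz_of_abs_sub_le {ι : Type*} {x y : ι → ℝ} {ρ : ℝ} (hρ : 0 < ρ)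
    (h : ∀ i j, |(y i - ρ * x i) - (y j - ρ * x j)| ≤ ρ / 2 * |x i - x j|) :
    ∃ f, IsBiLipschitz f ∧ ∀ i, f (x i) = y i := by
  set e : ι → ℝ := fun i => y i - ρ * x i
  have hfactors : Function.FactorsThrough e x := fun i j hij =>
    sub_eq_zero.1 <| abs_nonpos_iff.1 <| (h i j).trans_eq (by rw [hij, sub_self, abs_zero, mul_zero])
  have hlip : LipschitzOnWith (ρ / 2).toNNReal (Function.extend x e 0) (range x) := by
    rw [lipschitzOnWith_iff_dist_le_mul]
    rintro _ ⟨i, rfl⟩ _ ⟨j, rfl⟩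
    rw [hfactors.extend_apply, hfactors.extend_apply, Real.dist_eq, Real.dist_eq,
      Real.coe_toNNReal _ (by positivity)]
    exact h i j
  obtain ⟨g, hg, hextend⟩ := hlip.extend_real
  refine ⟨fun z => ρ * z + g z, isBiLipschitz_mul_add hg ?_, fun i => ?_⟩
  · rw [Real.coe_toNNReal _ (by positivity)]
    linarith
  · show ρ * x i + g (x i) = y i
    rw [← hextend (mem_range_self i), hfactors.extend_apply]
    ring

section Lacunary

variable {u : ℕ → ℝ} {q : ℝ}

theorem antitone_of_mul_succ_le (hu : ∀ n, 0 ≤ u n) (hq : 1 ≤ q)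
    (h : ∀ n, q * u (n + 1) ≤ u n) : Antitone u :=
  antitone_nat_of_succ_le fun n => (le_mul_of_one_le_left (hu _) hq).trans (h n)

theorem mul_le_of_lt_of_mul_succ_le (hu : ∀ n, 0 ≤ u n) (hq : 1 ≤ q)
    (h : ∀ n, q * u (n + 1) ≤ u n) {m n : ℕ} (hmn : m < n) : q * u n ≤ u m :=
  calc q * u n ≤ q * u (m + 1) := by
        gcongr
        exact antitone_of_mul_succ_le hu hq h hmn
    _ ≤ u m := h m

end Lacunary

section Density

/-- `S` fills a proportion `1 - ε` of every ball of radius `r ≤ R` about `x`, in outer measure. -/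
def DenseUpTo (S : Set ℝ) (ε R x : ℝ) : Prop :=
  ∀ r, 0 < r → r ≤ R → ENNReal.ofReal ((1 - ε) * (2 * r)) ≤ volume (S ∩ closedBall x r)

variable {S : Set ℝ} {ε : ℝ}

theorem exists_denseUpTo_of_tendsto {x : ℝ} (hε : 0 < ε)
    (hx : Tendsto (fun r => volume (S ∩ closedBall x r) / volume (closedBall x r))
      (𝓝[>] 0) (𝓝 1)) :
    ∃ R > 0, DenseUpTo S ε R x := by
  have hlt : ENNReal.ofReal (1 - ε) < 1 := ENNReal.ofReal_lt_one.2 (by linarith)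
  obtain ⟨R, hR, hsub⟩ := mem_nhdsGT_iff_exists_Ioc_subset.1 (hx (Ici_mem_nhds hlt))
  refine ⟨R, hR, fun r hr hrR => ?_⟩
  have hratio : ENNReal.ofReal (1 - ε) ≤
      volume (S ∩ closedBall x r) / volume (closedBall x r) := hsub ⟨hr, hrR⟩
  rw [Real.volume_closedBall, ENNReal.le_div_iff_mul_le (Or.inl (by simpa using hr))
    (Or.inl ENNReal.ofReal_ne_top), ← ENNReal.ofReal_mul' (by positivity)] at hratio
  exact hratio

theorem ae_exists_denseUpTo (S : Set ℝ) (hε : 0 < ε) :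
    ∀ᵐ x ∂volume.restrict S, ∃ R > 0, DenseUpTo S ε R x :=
  (Besicovitch.ae_tendsto_measure_inter_div volume S).mono fun _ hx =>
    exists_denseUpTo_of_tendsto hε hx

theorem exists_denseUpTo_of_measure_ne_zero (hS : volume S ≠ 0) (hε : 0 < ε) :
    ∃ x, ∃ R > 0, DenseUpTo S ε R x := by
  obtain ⟨x, -, hx⟩ := Measure.exists_mem_of_measure_ne_zero_of_ae hS (ae_exists_denseUpTo S hε)
  exact ⟨x, hx⟩

theorem exists_measure_denseUpTo_ne_zero (hS : volume S ≠ 0) (hε : 0 < ε) :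
    ∃ R > 0, volume {x ∈ S | DenseUpTo S ε R x} ≠ 0 := by
  by_contra! hnull
  have hnot : ∀ᵐ x ∂volume, ∀ k : ℕ, x ∉ {x ∈ S | DenseUpTo S ε (1 / (k + 1)) x} :=
    ae_all_iff.2 fun k => measure_eq_zero_iff_ae_notMem.1 (hnull _ (by positivity))
  have hS' : ∀ᵐ x ∂volume.restrict S, x ∉ S := by
    filter_upwards [ae_exists_denseUpTo S hε, ae_restrict_of_ae hnot] with x ⟨R, hR, hx⟩ hk hxS
    obtain ⟨k, hkR⟩ := exists_nat_one_div_lt hR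
    exact hk k ⟨hxS, fun r hr hrk => hx r hr (hrk.trans hkR.le)⟩
  exact hS (by simpa using measure_eq_zero_iff_ae_notMem.2 hS')

theorem DenseUpTo.exists_mem_abs_sub_le {t R : ℝ} (h : DenseUpTo S ε R t) {d w : ℝ}
    (hd : 0 ≤ d) (hw : 0 < w) (hR : d + w ≤ R) (hε : ε * (d + w) < w) :
    ∃ z ∈ S, |z - (t + d)| ≤ w := by
  by_contra! hfar
  set r := d + w
  have hdisj : Disjoint (S ∩ closedBall t r) (Icc (t + d - w) (t + d + w)) :=
    disjoint_left.2 fun z hz hz' =>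
      (hfar z hz.1).not_ge (abs_sub_le_iff.2 ⟨by linarith [hz'.2], by linarith [hz'.1]⟩)
  have hsub : S ∩ closedBall t r ∪ Icc (t + d - w) (t + d + w) ⊆ closedBall t r :=
    union_subset inter_subset_right fun z hz => by
      rw [mem_closedBall, Real.dist_eq, abs_le]
      constructor <;> linarith [hz.1, hz.2]
  have hmass : ENNReal.ofReal ((1 - ε) * (2 * r) + 2 * w) ≤ ENNReal.ofReal (2 * r) :=
    calc ENNReal.ofReal ((1 - ε) * (2 * r) + 2 * w)
        ≤ ENNReal.ofReal ((1 - ε) * (2 * r)) + ENNReal.ofReal (2 * w) := ENNReal.ofReal_add_le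
      _ ≤ volume (S ∩ closedBall t r) + volume (Icc (t + d - w) (t + d + w)) := by
          rw [Real.volume_Icc]
          gcongr
          · exact h r (by positivity) hR
          · exact le_of_eq (by ring_nf)
      _ = volume (S ∩ closedBall t r ∪ Icc (t + d - w) (t + d + w)) :=
          (measure_union hdisj measurableSet_Icc).symm
      _ ≤ volume (closedBall t r) := measure_mono hsub
      _ = ENNReal.ofReal (2 * r) := Real.volume_closedBall t r
  rw [ENNReal.ofReal_le_ofReal_iff (by positivity)] at hmass
  linarith

end Density

section Clusters

theorem abs_sub_le_of_same_cluster {σ σ' t v v' : ℝ} (hσ' : 0 ≤ σ') (hσσ' : 8 * σ' ≤ σ)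
    (hv : |v - (t + σ)| ≤ σ / 4) (hv' : |v' - (t + σ')| ≤ σ' / 4) :
    |(v - σ) - (v' - σ')| ≤ |σ - σ'| / 2 := by
  rw [abs_of_nonneg (by linarith : 0 ≤ σ - σ')]
  rw [abs_le] at *
  constructor <;> linarith

theorem abs_sub_le_of_separated_clusters {S S' β β' u u' : ℝ} (hS' : 0 ≤ S') (hSS' : 3 * S' ≤ S)
    (hβ : 0 ≤ β) (hβ' : β' ≤ 1 / 8) (hu : |u| ≤ 5 / 32 * S) (hu' : |u'| ≤ 5 / 32 * S') :
    |u - u'| ≤ |S * (1 + β) - S' * (1 + β')| / 2 := by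
  have hgap : 5 / 8 * S ≤ S * (1 + β) - S' * (1 + β') := by nlinarith
  rw [abs_of_nonneg (a := S * (1 + β) - S' * (1 + β')) (by linarith)]
  linarith [abs_sub u u']

variable {c b t : ℕ → ℝ} {y : ℕ → ℕ → ℝ} {t₀ ρ : ℝ}

theorem abs_sub_le_of_clusters (hρ : 0 < ρ)
    (hc : ∀ n, 0 < c n) (hc3 : ∀ n n', n < n' → 3 * c n' ≤ c n)
    (hb : ∀ m, 0 < b m) (hb8 : ∀ m, b m ≤ 1 / 8) (hb8' : ∀ m m', m < m' → 8 * b m' ≤ b m)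
    (ht : ∀ n, |t n - (t₀ + ρ * c n)| ≤ ρ * c n / 8)
    (hy : ∀ n m, |y n m - (t n + ρ * c n * b m)| ≤ ρ * c n * b m / 4) (n m n' m' : ℕ) :
    |(y n m - ρ * (c n * (1 + b m))) - (y n' m' - ρ * (c n' * (1 + b m')))| ≤
      ρ / 2 * |c n * (1 + b m) - c n' * (1 + b m')| := by
  wlog hlex : toLex (n, m) ≤ toLex (n', m') generalizing n m n' m'
  · rw [abs_sub_comm, abs_sub_comm (c n * _)]
    exact this n' m' n m (le_of_not_ge hlex)
  have hscale : ρ / 2 * |c n * (1 + b m) - c n' * (1 + b m')| =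
      |ρ * c n * (1 + b m) - ρ * c n' * (1 + b m')| / 2 := by
    rw [show ρ * c n * (1 + b m) - ρ * c n' * (1 + b m') =
      ρ * (c n * (1 + b m) - c n' * (1 + b m')) by ring, abs_mul, abs_of_pos hρ]
    ring
  rw [hscale]
  obtain hnn' | ⟨rfl, hmm'⟩ : n < n' ∨ n = n' ∧ m ≤ m' := Prod.Lex.toLex_le_toLex.1 hlex
  · have herr : ∀ n m, |y n m - ρ * (c n * (1 + b m)) - t₀| ≤ 5 / 32 * (ρ * c n) := fun n m =>
      calc |y n m - ρ * (c n * (1 + b m)) - t₀|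
          = |(t n - (t₀ + ρ * c n)) + (y n m - (t n + ρ * c n * b m))| := by ring_nf
        _ ≤ ρ * c n / 8 + ρ * c n * b m / 4 := (abs_add_le _ _).trans (add_le_add (ht n) (hy n m))
        _ ≤ 5 / 32 * (ρ * c n) := by nlinarith [mul_pos hρ (hc n), hb8 m]
    have := abs_sub_le_of_separated_clusters (mul_pos hρ (hc n')).le
      (by nlinarith [hc3 n n' hnn']) (hb m).le (hb8 m') (herr n m) (herr n' m')
    convert this using 2
    ring
  · rcases hmm'.eq_or_lt with rfl | hmm'
    · simp
    have := abs_sub_le_of_same_cluster (σ := ρ * c n * b m) (mul_pos (mul_pos hρ (hc n)) (hb m')).le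
      (by nlinarith [hb8' m m' hmm', mul_pos hρ (hc n)]) (hy n m) (hy n m')
    convert this using 2 <;> ring_nf

end Clusters

theorem exists_cluster_points {E : Set ℝ} (hE : volume E ≠ 0) {c b : ℕ → ℝ}
    (hc : ∀ n, 0 < c n) (hc1 : ∀ n, c n ≤ 1) (hb : ∀ m, 0 < b m) (hb1 : ∀ m, b m ≤ 1) :
    ∃ t₀ ρ : ℝ, 0 < ρ ∧ ∃ t : ℕ → ℝ, ∃ y : ℕ → ℕ → ℝ,
      (∀ n, |t n - (t₀ + ρ * c n)| ≤ ρ * c n / 8) ∧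
      ∀ n m, y n m ∈ E ∧ |y n m - (t n + ρ * c n * b m)| ≤ ρ * c n * b m / 4 := by
  -- `ε = 1 / 10` leaves room in both windows: `ε * (9 / 8) < 1 / 8` and `ε * (5 / 4) < 1 / 4`.
  obtain ⟨R₁, hR₁, hdense⟩ := exists_measure_denseUpTo_ne_zero hE (ε := 1 / 10) (by norm_num)
  obtain ⟨t₀, R₂, hR₂, ht₀⟩ := exists_denseUpTo_of_measure_ne_zero hdense (ε := 1 / 10) (by norm_num)
  obtain ⟨ρ, hρ, hρ₁, hρ₂⟩ : ∃ ρ, 0 < ρ ∧ 2 * ρ ≤ R₁ ∧ 2 * ρ ≤ R₂ :=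
    ⟨min R₁ R₂ / 2, half_pos (lt_min hR₁ hR₂), by linarith [min_le_left R₁ R₂],
      by linarith [min_le_right R₁ R₂]⟩
  have hcentre : ∀ n, ∃ s ∈ {x ∈ E | DenseUpTo E (1 / 10) R₁ x},
      |s - (t₀ + ρ * c n)| ≤ ρ * c n / 8 := fun n => by
    have hρc : ρ * c n ≤ ρ := mul_le_of_le_one_right hρ.le (hc1 n)
    have := mul_pos hρ (hc n)
    exact ht₀.exists_mem_abs_sub_le this.le (by positivity) (by linarith) (by linarith)
  choose t ht using hcentre
  have hpoint : ∀ n m, ∃ z ∈ E, |z - (t n + ρ * c n * b m)| ≤ ρ * c n * b m / 4 := fun n m => by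
    have hρcb : ρ * c n * b m ≤ ρ := by
      rw [mul_assoc]
      exact mul_le_of_le_one_right hρ.le (mul_le_one₀ (hc1 n) (hb m).le (hb1 m))
    have := mul_pos (mul_pos hρ (hc n)) (hb m)
    exact (ht n).1.2.exists_mem_abs_sub_le this.le (by positivity) (by linarith) (by linarith)
  choose y hy using hpoint
  exact ⟨t₀, ρ, hρ, t, y, fun n => (ht n).2, fun n m => hy n m⟩

theorem exists_isBiLipschitz_forall_mem {E : Set ℝ} (hE : volume E ≠ 0) {c b : ℕ → ℝ}
    (hc : ∀ n, 0 < c n) (hc3 : ∀ n, 3 * c (n + 1) ≤ c n) (hc0 : c 0 ≤ 1)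
    (hb : ∀ m, 0 < b m) (hb8 : ∀ m, 8 * b (m + 1) ≤ b m) (hb0 : b 0 ≤ 1 / 8) :
    ∃ f, IsBiLipschitz f ∧ ∀ n m, f (c n * (1 + b m)) ∈ E := by
  have hc_nonneg n : 0 ≤ c n := (hc n).le
  have hb_nonneg m : 0 ≤ b m := (hb m).le
  have hc_le n : c n ≤ 1 :=
    (antitone_of_mul_succ_le hc_nonneg (by norm_num) hc3 n.zero_le).trans hc0
  have hb_le m : b m ≤ 1 / 8 :=
    (antitone_of_mul_succ_le hb_nonneg (by norm_num) hb8 m.zero_le).trans hb0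
  obtain ⟨t₀, ρ, hρ, t, y, ht, hy⟩ :=
    exists_cluster_points hE hc hc_le hb fun m => (hb_le m).trans (by norm_num)
  obtain ⟨f, hf, hfy⟩ := exists_isBiLipschitz_of_abs_sub_le
    (x := fun p : ℕ × ℕ => c p.1 * (1 + b p.2)) (y := fun p => y p.1 p.2) hρ fun p q =>
      abs_sub_le_of_clusters hρ hc
        (fun _ _ => mul_le_of_lt_of_mul_succ_le hc_nonneg (by norm_num) hc3) hb hb_le
        (fun _ _ => mul_le_of_lt_of_mul_succ_le hb_nonneg (by norm_num) hb8)
        ht (fun n m => (hy n m).2) p.1 p.2 q.1 q.2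
  exact ⟨f, hf, fun n m => hfy (n, m) ▸ (hy n m).1⟩

theorem stmt14_general (a : ℕ → ℝ) (hpos : ∀ n ≥ 1, 0 < a n)
    (hsum : Summable (fun n : ℕ => a (n + 2) / a (n + 1)))
    (hδ : a 1 + ∑' n : ℕ, a (n + 2) / a (n + 1) < 1/8)
    (F : Set ℝ)
    (hF : F = {x : ℝ | ∃ n ≥ 1, ∃ m ≥ 1, x = (3 : ℝ) ^ (-(n : ℤ)) * (1 + a m)})
    (E : Set ℝ) (hEpos : 0 < volume E) :
    ∃ f : ℝ → ℝ, (∃ L : ℝ, 1 < L ∧ ∀ x y : ℝ,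
        L⁻¹ * |x - y| ≤ |f x - f y| ∧ |f x - f y| ≤ L * |x - y|) ∧
      f '' F ⊆ E := by
  have hratio_nonneg n : 0 ≤ a (n + 2) / a (n + 1) :=
    div_nonneg (hpos _ (by omega)).le (hpos _ (by omega)).le
  have hratio m : 8 * a (m + 2) ≤ a (m + 1) := by
    have h := (hsum.le_tsum m fun j _ => hratio_nonneg j).trans_lt
      (by linarith [hpos 1 le_rfl] : ∑' n : ℕ, a (n + 2) / a (n + 1) < 1 / 8)
    rw [div_lt_iff₀ (hpos _ (by omega))] at h
    linarith
  have ha1 : a 1 ≤ 1 / 8 := by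
    linarith [(tsum_nonneg hratio_nonneg : 0 ≤ ∑' n : ℕ, a (n + 2) / a (n + 1))]
  have hc_succ (n : ℕ) : 3 * (3 : ℝ) ^ (-(((n + 1 : ℕ) : ℤ) + 1)) = (3 : ℝ) ^ (-((n : ℤ) + 1)) := by
    rw [← zpow_one_add₀ (by norm_num)]
    push_cast
    ring_nf
  obtain ⟨f, hf, hfE⟩ := exists_isBiLipschitz_forall_mem hEpos.ne'
    (c := fun n : ℕ => (3 : ℝ) ^ (-((n : ℤ) + 1))) (b := fun m => a (m + 1))
    (fun n => by positivity) (fun n => (hc_succ n).le) (by norm_num)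
    (fun m => hpos _ (by omega)) hratio ha1
  refine ⟨f, hf, ?_⟩
  rintro _ ⟨x, hx, rfl⟩
  rw [hF] at hx
  obtain ⟨n, hn, m, hm, rfl⟩ := hx
  obtain ⟨k, rfl⟩ : ∃ k : ℕ, n = k + 1 := ⟨(n - 1).toNat, by omega⟩
  obtain ⟨l, rfl⟩ : ∃ l, m = l + 1 := ⟨m - 1, by omega⟩
  exact hfE k l

theorem stmt14 (a : ℕ → ℝ) (hpos : ∀ n ≥ 1, 0 < a n)
    (hsum : Summable (fun n : ℕ => a (n + 2) / a (n + 1)))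
    (hδ : a 1 + ∑' n : ℕ, a (n + 2) / a (n + 1) < 1/8)
    (F : Set ℝ)
    (hF : F = {x : ℝ | ∃ n ≥ 1, ∃ m ≥ 1, x = (3 : ℝ) ^ (-(n : ℤ)) * (1 + a m)})
    (E : Set ℝ) (hE : MeasurableSet E) (hEpos : 0 < volume E) :
    ∃ f : ℝ → ℝ, (∃ L : ℝ, 1 < L ∧ ∀ x y : ℝ,
        L⁻¹ * |x - y| ≤ |f x - f y| ∧ |f x - f y| ≤ L * |x - y|) ∧
      f '' F ⊆ E :=
  stmt14_general a hpos hsum hδ F hF E hEpos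
end
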